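/- Let G be a k-tree-connected graph (containing k edge-disjoint spanning trees) with k ≥ m, and let X be an independent set in G. Then G has an m-tree-connected spanning subgraph H such that for each v ∈ X, d_H(v) ≤ ⌈(m/k)·d_G(v)⌉. -/

import Mathlib

namespace TreePack

variable {α : Type*} [DecidableEq α]

/-- An (integer) polymatroid rank function on finsets. -/
structure IsPolyRank (r : Finset α → ℕ) : Prop where
  empty : r ∅ = 0
  mono : ∀ ⦃S T : Finset α⦄, S ⊆ T → r S ≤ r T
  step : ∀ (S : Finset α) (x : α), r (insert x S) ≤ r S + 1
  submod : ∀ (S T : Finset α), r (S ∪ T) + r (S ∩ T) ≤ r S + r T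

namespace IsPolyRank

variable {r : Finset α → ℕ}

theorem le_card (h : IsPolyRank r) (S : Finset α) : r S ≤ S.card := by
  classical
  induction S using Finset.induction_on with
  | empty => simp [h.empty]
  | @insert a s hx ih =>
    calc r (insert a s) ≤ r s + 1 := h.step s a
    _ ≤ s.card + 1 := by omega
    _ = (insert a s).card := by rw [Finset.card_insert_of_notMem hx]

/-- Adding a set increases rank by at most its cardinality. -/
theorem le_add_card (h : IsPolyRank r) (S D : Finset α) :
    r (S ∪ D) ≤ r S + D.card := by
  classical
  induction D using Finset.induction_on with
  | empty => simpa using h.mono (by simp : S ∪ ∅ ⊆ S)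
  | @insert a s hx ih =>
    have he : S ∪ insert a s = insert a (S ∪ s) := by
      ext y; simp [or_comm, or_assoc, or_left_comm]
    rw [he]
    calc r (insert a (S ∪ s)) ≤ r (S ∪ s) + 1 := h.step _ a
    _ ≤ r S + s.card + 1 := by omega
    _ ≤ r S + (insert a s).card := by
        rw [Finset.card_insert_of_notMem hx]; omega

/-- Diminishing marginals. -/
theorem marginal (h : IsPolyRank r) {S T : Finset α} (hST : S ⊆ T) (x : α) :
    r (insert x T) + r S ≤ r T + r (insert x S) := by
  by_cases hx : x ∈ T
  · rw [Finset.insert_eq_self.2 hx]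
    have := h.mono (Finset.subset_insert x S)
    omega
  · have hu : (insert x S) ∪ T = insert x T := by
      rw [Finset.insert_union, Finset.union_eq_right.2 hST]
    have hi : (insert x S) ∩ T = S := by
      rw [Finset.insert_inter_of_notMem hx, Finset.inter_eq_left.2 hST]
    have := h.submod (insert x S) T
    rw [hu, hi] at this
    omega

/-- A coloop of `S` (deleting `x` drops the rank) is a coloop of any subset. -/
theorem coloop_subset (h : IsPolyRank r) {S S' : Finset α} {x : α}
    (hS' : S' ⊆ S) (hx : x ∈ S')
    (hc : r (S.erase x) + 1 ≤ r S) : r (S'.erase x) + 1 ≤ r S' := by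
  have h1 : S'.erase x ⊆ S.erase x := Finset.erase_subset_erase x hS'
  have h2 := h.marginal h1 x
  rw [Finset.insert_erase hx, Finset.insert_erase (hS' hx)] at h2
  omega

/-- Deleting a set of coloops drops the rank by the cardinality. -/
theorem coloops_delete (h : IsPolyRank r) {D S : Finset α} (hD : D ⊆ S)
    (hc : ∀ x ∈ D, r (S.erase x) + 1 ≤ r S) : r (S \ D) + D.card ≤ r S := by
  classical
  induction D using Finset.induction_on generalizing S with
  | empty => simpa using h.mono (Finset.sdiff_subset)
  | @insert a s hx ih =>
    have has : a ∈ S := hD (by simp)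
    have hsub : s ⊆ S.erase a := fun y hy =>
      Finset.mem_erase.2 ⟨fun hya => hx (hya ▸ hy), hD (by simp [hy])⟩
    have hc' : ∀ x ∈ s, r ((S.erase a).erase x) + 1 ≤ r (S.erase a) := by
      intro x hxmem
      exact h.coloop_subset (Finset.erase_subset a S)
        (hsub hxmem) (hc x (by simp [hxmem]))
    have key := ih hsub hc'
    have hSd : S \ insert a s = (S.erase a) \ s := by
      ext y
      simp only [Finset.mem_sdiff, Finset.mem_insert, Finset.mem_erase, not_or]
      tauto
    have hca : r (S.erase a) + 1 ≤ r S := hc a (by simp)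
    rw [hSd, Finset.card_insert_of_notMem hx]
    omega


/-- Every ground set contains an "independent" set of full rank. -/
theorem exists_basis (h : IsPolyRank r) (E : Finset α) :
    ∃ B ⊆ E, r B = B.card ∧ r B = r E := by
  classical
  generalize hn : E.card = n
  induction n using Nat.strong_induction_on generalizing E with
  | _ n ih =>
  subst hn
  by_cases hco : ∃ x ∈ E, r (E.erase x) = r E
  · obtain ⟨x, hx, hrx⟩ := hco
    obtain ⟨B, hBE, hB1, hB2⟩ := ih (E.erase x).card
      (by rw [Finset.card_erase_of_mem hx]; have := Finset.card_pos.2 ⟨x, hx⟩; omega)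
      (E.erase x) rfl
    exact ⟨B, hBE.trans (Finset.erase_subset x E), hB1, by omega⟩
  · push_neg at hco
    refine ⟨E, le_refl E, ?_, rfl⟩
    have hc : ∀ x ∈ E, r (E.erase x) + 1 ≤ r E := by
      intro x hx
      have h1 : r (E.erase x) ≤ r E := h.mono (Finset.erase_subset x E)
      have h2 := hco x hx
      omega
    have := h.coloops_delete (le_refl E) hc
    simp only [Finset.sdiff_self, h.empty] at this
    have := h.le_card E
    omega

/-- Trim an independent set to a smaller one of any size. -/
theorem indep_trim (h : IsPolyRank r) {I : Finset α} (hI : r I = I.card)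
    {t : ℕ} (ht : t ≤ I.card) : ∃ I' ⊆ I, r I' = I'.card ∧ I'.card = t := by
  classical
  obtain ⟨I', hsub, hcard⟩ := Finset.exists_subset_card_eq ht
  refine ⟨I', hsub, ?_, hcard⟩
  have h1 : r I' ≤ I'.card := h.le_card I'
  have h2 : r (I' ∪ (I \ I')) ≤ r I' + (I \ I').card := h.le_add_card I' _
  rw [Finset.union_sdiff_of_subset hsub] at h2
  have h3 : (I \ I').card = I.card - I'.card := Finset.card_sdiff_of_subset hsub
  have h4 : I'.card ≤ I.card := Finset.card_le_card hsub
  omega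

theorem singleton_le_one (h : IsPolyRank r) (x : α) : r {x} ≤ 1 := by
  have := h.le_card {x}; simpa using this

theorem insert_rank_zero (h : IsPolyRank r) {x : α} (hx : r {x} = 0) (S : Finset α) :
    r (insert x S) = r S := by
  classical
  have h1 : r S ≤ r (insert x S) := h.mono (Finset.subset_insert x S)
  have h2 := h.submod S {x}
  have hu : S ∪ {x} = insert x S := by ext y; simp [or_comm]
  rw [hu, hx] at h2
  have h3 : r (S ∩ {x}) ≥ 0 := Nat.zero_le _
  omega

end IsPolyRank

open IsPolyRank in
/-- Schrijver-style proof of the (poly)matroid intersection theorem,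
existence half. -/
theorem polymatroid_intersection {r₁ r₂ : Finset α → ℕ}
    (h₁ : IsPolyRank r₁) (h₂ : IsPolyRank r₂) (E : Finset α) (t : ℕ)
    (hyp : ∀ T ⊆ E, t ≤ r₁ T + r₂ (E \ T)) :
    ∃ I ⊆ E, r₁ I = I.card ∧ r₂ I = I.card ∧ I.card = t := by
  classical
  generalize hn : E.card = n
  induction n using Nat.strong_induction_on generalizing r₁ r₂ E t with
  | _ n ih =>
  subst hn
  rcases Nat.eq_zero_or_pos t with ht0 | htpos
  · exact ⟨∅, by simp, by simp [h₁.empty], by simp [h₂.empty], by simp [ht0]⟩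
  rcases Finset.eq_empty_or_nonempty E with hE | ⟨e, he⟩
  · exfalso
    have := hyp ∅ (by simp)
    simp [hE, h₁.empty, h₂.empty] at this
    omega
  set E' := E.erase e with hE'
  have hcard' : E'.card < E.card := by
    rw [hE', Finset.card_erase_of_mem he]
    have := Finset.card_pos.2 ⟨e, he⟩; omega
  have hE'sub : E' ⊆ E := Finset.erase_subset e E
  have hinsE : insert e E' = E := Finset.insert_erase he
  by_cases h1e : r₁ {e} = 0
  · -- e is a loop of r₁ : delete it
    have hyp' : ∀ T ⊆ E', t ≤ r₁ T + r₂ (E' \ T) := by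
      intro T hT
      have hTe : insert e T ⊆ E := by
        intro y hy; rcases Finset.mem_insert.1 hy with rfl | hy
        · exact he
        · exact hE'sub (hT hy)
      have h5 := hyp (insert e T) hTe
      have h6 : E \ insert e T = E' \ T := by
        ext y
        simp only [Finset.mem_sdiff, Finset.mem_insert, not_or, hE', Finset.mem_erase]
        tauto
      rw [h6, h₁.insert_rank_zero h1e T] at h5
      exact h5
    obtain ⟨I, hIE, a, b, c⟩ := ih E'.card hcard' h₁ h₂ E' t hyp' rfl
    exact ⟨I, hIE.trans hE'sub, a, b, c⟩
  by_cases h2e : r₂ {e} = 0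
  · -- e is a loop of r₂ : delete it
    have hyp' : ∀ T ⊆ E', t ≤ r₁ T + r₂ (E' \ T) := by
      intro T hT
      have h5 := hyp T (hT.trans hE'sub)
      have heT : e ∉ T := fun hm => (Finset.mem_erase.1 (hT hm)).1 rfl
      have h6 : E \ T = insert e (E' \ T) := by
        ext y
        simp only [Finset.mem_sdiff, Finset.mem_insert, hE', Finset.mem_erase]
        constructor
        · rintro ⟨hyE, hyT⟩
          by_cases hye : y = e
          · left; exact hye
          · right; exact ⟨⟨hye, hyE⟩, hyT⟩
        · rintro (rfl | ⟨⟨hne, hyE⟩, hyT⟩)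
          · exact ⟨he, heT⟩
          · exact ⟨hyE, hyT⟩
      rw [h6, h₂.insert_rank_zero h2e _] at h5
      exact h5
    obtain ⟨I, hIE, a, b, c⟩ := ih E'.card hcard' h₁ h₂ E' t hyp' rfl
    exact ⟨I, hIE.trans hE'sub, a, b, c⟩
  have h1e1 : r₁ {e} = 1 := by have := h₁.singleton_le_one e; omega
  have h2e1 : r₂ {e} = 1 := by have := h₂.singleton_le_one e; omega
  by_cases hdel : ∀ T ⊆ E', t ≤ r₁ T + r₂ (E' \ T)
  · obtain ⟨I, hIE, a, b, c⟩ := ih E'.card hcard' h₁ h₂ E' t hdel rfl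
    exact ⟨I, hIE.trans hE'sub, a, b, c⟩
  by_cases hcon : ∀ T ⊆ E', t + 1 ≤ r₁ (insert e T) + r₂ (insert e (E' \ T))
  · -- contract e in both
    set r₁' : Finset α → ℕ := fun S => r₁ (insert e S) - 1 with hr₁'
    set r₂' : Finset α → ℕ := fun S => r₂ (insert e S) - 1 with hr₂'
    have hone₁ : ∀ S, 1 ≤ r₁ (insert e S) := by
      intro S
      calc 1 = r₁ {e} := h1e1.symm
      _ ≤ r₁ (insert e S) := h₁.mono (by intro y hy; simp at hy; simp [hy])
    have hone₂ : ∀ S, 1 ≤ r₂ (insert e S) := by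
      intro S
      calc 1 = r₂ {e} := h2e1.symm
      _ ≤ r₂ (insert e S) := h₂.mono (by intro y hy; simp at hy; simp [hy])
    have hpr : ∀ (rr : Finset α → ℕ), IsPolyRank rr → (rr {e} = 1) →
        (∀ S, 1 ≤ rr (insert e S)) → IsPolyRank (fun S => rr (insert e S) - 1) := by
      intro rr hrr hre hones
      constructor
      · show rr (insert e ∅) - 1 = 0
        have : insert e (∅:Finset α) = {e} := rfl
        rw [this, hre]
      · intro S T hST
        have := hrr.mono (Finset.insert_subset_insert e hST)
        have := hones S
        omega
      · intro S x
        have h5 : insert x (insert e S) = insert e (insert x S) := by ext y; simp; tauto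
        have := hrr.step (insert e S) x
        rw [h5] at this
        have := hones S
        omega
      · intro S T
        have hu : insert e S ∪ insert e T = insert e (S ∪ T) := by
          ext y; simp only [Finset.mem_union, Finset.mem_insert]; tauto
        have hi : insert e S ∩ insert e T = insert e (S ∩ T) := by
          ext y; simp only [Finset.mem_inter, Finset.mem_insert]; tauto
        have := hrr.submod (insert e S) (insert e T)
        rw [hu, hi] at this
        have := hones (S ∪ T)
        have := hones (S ∩ T)
        have := hones S
        have := hones T
        omega
    have h₁' : IsPolyRank r₁' := hpr r₁ h₁ h1e1 hone₁
    have h₂' : IsPolyRank r₂' := hpr r₂ h₂ h2e1 hone₂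
    have hyp' : ∀ T ⊆ E', t - 1 ≤ r₁' T + r₂' (E' \ T) := by
      intro T hT
      have := hcon T hT
      have := hone₁ T
      have := hone₂ (E' \ T)
      simp only [hr₁', hr₂']
      omega
    obtain ⟨I', hI'E, a, b, c⟩ := ih E'.card hcard' h₁' h₂' E' (t-1) hyp' rfl
    have heI' : e ∉ I' := fun hmem => (Finset.mem_erase.1 (hI'E hmem)).1 rfl
    refine ⟨insert e I', ?_, ?_, ?_, ?_⟩
    · intro y hy; rcases Finset.mem_insert.1 hy with rfl | hy
      · exact he
      · exact hE'sub (hI'E hy)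
    · have : r₁' I' = I'.card := a
      simp only [hr₁'] at this
      have hcardi : (insert e I').card = I'.card + 1 := Finset.card_insert_of_notMem heI'
      have := hone₁ I'
      omega
    · have : r₂' I' = I'.card := b
      simp only [hr₂'] at this
      have hcardi : (insert e I').card = I'.card + 1 := Finset.card_insert_of_notMem heI'
      have := hone₂ I'
      omega
    · rw [Finset.card_insert_of_notMem heI', c]; omega
  -- both fail : contradiction
  exfalso
  push_neg at hdel hcon
  obtain ⟨T₁, hT₁, hd⟩ := hdel
  obtain ⟨T₂, hT₂, hc⟩ := hcon
  have heT₁ : e ∉ T₁ := fun hm => (Finset.mem_erase.1 (hT₁ hm)).1 rfl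
  have heT₂ : e ∉ T₂ := fun hm => (Finset.mem_erase.1 (hT₂ hm)).1 rfl
  -- submodularity on the r₁ side
  have hs₁ : r₁ (T₁ ∪ T₂ ∪ {e}) + r₁ (T₁ ∩ T₂) ≤ r₁ T₁ + r₁ (insert e T₂) := by
    have := h₁.submod T₁ (insert e T₂)
    have hu : T₁ ∪ insert e T₂ = T₁ ∪ T₂ ∪ {e} := by
      ext y
      simp only [Finset.mem_union, Finset.mem_insert, Finset.mem_singleton]
      tauto
    have hi : T₁ ∩ insert e T₂ = T₁ ∩ T₂ := by
      ext y
      simp only [Finset.mem_inter, Finset.mem_insert]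
      constructor
      · rintro ⟨hy1, rfl | hy2⟩
        · exact absurd hy1 heT₁
        · exact ⟨hy1, hy2⟩
      · rintro ⟨hy1, hy2⟩; exact ⟨hy1, Or.inr hy2⟩
    rw [hu, hi] at this
    exact this
  -- submodularity on the r₂ side
  have hs₂ : r₂ (E \ (T₁ ∩ T₂)) + r₂ (E' \ (T₁ ∪ T₂)) ≤
      r₂ (E' \ T₁) + r₂ (insert e (E' \ T₂)) := by
    have := h₂.submod (E' \ T₁) (insert e (E' \ T₂))
    have hu : (E' \ T₁) ∪ insert e (E' \ T₂) = E \ (T₁ ∩ T₂) := by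
      ext y
      simp only [Finset.mem_union, Finset.mem_insert, Finset.mem_sdiff, hE',
        Finset.mem_erase, Finset.mem_inter, not_and]
      constructor
      · rintro (⟨⟨hne, hyE⟩, hnT⟩ | rfl | ⟨⟨hne, hyE⟩, hnT⟩)
        · exact ⟨hyE, fun h1 _ => hnT h1⟩
        · exact ⟨he, fun h1 => absurd h1 heT₁⟩
        · exact ⟨hyE, fun _ h2 => hnT h2⟩
      · rintro ⟨hyE, hnT⟩
        by_cases hye : y = e
        · right; left; exact hye
        · by_cases hyT₁ : y ∈ T₁
          · right; right; exact ⟨⟨hye, hyE⟩, hnT hyT₁⟩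
          · left; exact ⟨⟨hye, hyE⟩, hyT₁⟩
    have hi : (E' \ T₁) ∩ insert e (E' \ T₂) = E' \ (T₁ ∪ T₂) := by
      ext y
      simp only [Finset.mem_inter, Finset.mem_insert, Finset.mem_sdiff, hE',
        Finset.mem_erase, Finset.mem_union, not_or]
      constructor
      · rintro ⟨⟨⟨hne, hyE⟩, hnT₁⟩, (rfl | ⟨_, hnT₂⟩)⟩
        · exact absurd rfl hne
        · exact ⟨⟨hne, hyE⟩, hnT₁, hnT₂⟩
      · rintro ⟨⟨hne, hyE⟩, hnT₁, hnT₂⟩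
        exact ⟨⟨⟨hne, hyE⟩, hnT₁⟩, Or.inr ⟨⟨hne, hyE⟩, hnT₂⟩⟩
    rw [hu, hi] at this
    exact this
  -- two applications of the hypothesis
  have hy1 : t ≤ r₁ (T₁ ∩ T₂) + r₂ (E \ (T₁ ∩ T₂)) :=
    hyp (T₁ ∩ T₂) ((Finset.inter_subset_left).trans (hT₁.trans hE'sub))
  have hy2 : t ≤ r₁ (T₁ ∪ T₂ ∪ {e}) + r₂ (E' \ (T₁ ∪ T₂)) := by
    have hsubE : T₁ ∪ T₂ ∪ {e} ⊆ E := by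
      intro y hy
      rcases Finset.mem_union.1 hy with hy | hy
      · rcases Finset.mem_union.1 hy with hy | hy
        · exact hE'sub (hT₁ hy)
        · exact hE'sub (hT₂ hy)
      · rw [Finset.mem_singleton.1 hy]; exact he
    have h6 : E \ (T₁ ∪ T₂ ∪ {e}) = E' \ (T₁ ∪ T₂) := by
      ext y
      simp only [Finset.mem_sdiff, Finset.mem_union, Finset.mem_singleton, not_or, hE',
        Finset.mem_erase]
      tauto
    have := hyp (T₁ ∪ T₂ ∪ {e}) hsubE
    rw [h6] at this
    exact this
  omega


open IsPolyRank in
/-- Dual rank function with respect to a ground set `B`. -/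
theorem isPolyRank_dual {rN : Finset α → ℕ} (hN : IsPolyRank rN) (B : Finset α) :
    IsPolyRank (fun S => (S ∩ B).card + rN (B \ S) - rN B) := by
  classical
  have safety : ∀ S : Finset α, rN B ≤ rN (B \ S) + (S ∩ B).card := by
    intro S
    have h1 : (B \ S) ∪ (S ∩ B) = B := by
      ext y; simp only [Finset.mem_union, Finset.mem_sdiff, Finset.mem_inter]; tauto
    have := hN.le_add_card (B \ S) (S ∩ B)
    rw [h1] at this
    omega
  constructor
  · simp
  · -- monotone, one element at a time
    have marg : ∀ (S : Finset α) (a : α),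
        (S ∩ B).card + rN (B \ S) - rN B ≤
        ((insert a S) ∩ B).card + rN (B \ insert a S) - rN B := by
      intro S a
      by_cases haB : a ∈ B
      · by_cases haS : a ∈ S
        · rw [Finset.insert_eq_self.2 haS]
        · have h1 : (insert a S) ∩ B = insert a (S ∩ B) := by
            ext y; simp only [Finset.mem_inter, Finset.mem_insert]
            constructor
            · rintro ⟨rfl | hyS, hyB⟩
              · exact Or.inl rfl
              · exact Or.inr ⟨hyS, hyB⟩
            · rintro (rfl | ⟨hyS, hyB⟩)
              · exact ⟨Or.inl rfl, haB⟩
              · exact ⟨Or.inr hyS, hyB⟩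
          have h2 : a ∉ S ∩ B := fun hm => haS (Finset.mem_inter.1 hm).1
          have h3 : B \ S = insert a (B \ insert a S) := by
            ext y; simp only [Finset.mem_sdiff, Finset.mem_insert]
            constructor
            · rintro ⟨hyB, hyS⟩
              by_cases hya : y = a
              · exact Or.inl hya
              · exact Or.inr ⟨hyB, by tauto⟩
            · rintro (rfl | ⟨hyB, hyS⟩)
              · exact ⟨haB, haS⟩
              · exact ⟨hyB, fun hm => hyS (Or.inr hm)⟩
          have h4 := hN.step (B \ insert a S) a
          rw [← h3] at h4
          rw [h1, Finset.card_insert_of_notMem h2]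
          have := safety S
          omega
      · have h1 : (insert a S) ∩ B = S ∩ B := by
          ext y; simp only [Finset.mem_inter, Finset.mem_insert]
          constructor
          · rintro ⟨rfl | hyS, hyB⟩
            · exact absurd hyB haB
            · exact ⟨hyS, hyB⟩
          · rintro ⟨hyS, hyB⟩; exact ⟨Or.inr hyS, hyB⟩
        have h2 : B \ insert a S = B \ S := by
          ext y; simp only [Finset.mem_sdiff, Finset.mem_insert, not_or]
          constructor
          · rintro ⟨hyB, _, h⟩; exact ⟨hyB, h⟩
          · rintro ⟨hyB, h⟩; exact ⟨hyB, fun hya => haB (hya ▸ hyB), h⟩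
        rw [h1, h2]
    intro S T hST
    classical
    suffices key : ∀ (D T : Finset α), S ⊆ T → T \ S = D →
        (S ∩ B).card + rN (B \ S) - rN B ≤ (T ∩ B).card + rN (B \ T) - rN B by
      exact key (T \ S) T hST rfl
    intro D
    induction D using Finset.induction_on with
    | empty =>
      intro T hST hd
      have : T = S := by
        have := Finset.sdiff_eq_empty_iff_subset.1 hd
        exact Finset.Subset.antisymm this hST
      rw [this]
    | @insert a D haD ihD =>
      intro T hST hd
      have haT : a ∈ T := (Finset.mem_sdiff.1 (hd ▸ Finset.mem_insert_self a D)).1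
      have haS : a ∉ S := (Finset.mem_sdiff.1 (hd ▸ Finset.mem_insert_self a D)).2
      set T' := T.erase a with hT'
      have hST' : S ⊆ T' := fun y hy =>
        Finset.mem_erase.2 ⟨fun hya => haS (hya ▸ hy), hST hy⟩
      have htd : T' \ S = D := by
        rw [hT']
        ext y
        simp only [Finset.mem_sdiff, Finset.mem_erase]
        constructor
        · rintro ⟨⟨hya, hyT⟩, hyS⟩
          have : y ∈ T \ S := Finset.mem_sdiff.2 ⟨hyT, hyS⟩
          rw [hd] at this
          rcases Finset.mem_insert.1 this with rfl | hyD
          · exact absurd rfl hya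
          · exact hyD
        · intro hyD
          have : y ∈ T \ S := hd ▸ Finset.mem_insert_of_mem hyD
          have h5 := Finset.mem_sdiff.1 this
          exact ⟨⟨fun hya => haD (hya ▸ hyD), h5.1⟩, h5.2⟩
      have step1 := ihD T' hST' htd
      have step2 := marg T' a
      rw [Finset.insert_erase haT] at step2
      omega
  · intro S x
    by_cases hxB : x ∈ B
    · have h1 : ((insert x S) ∩ B).card ≤ (S ∩ B).card + 1 := by
        have : (insert x S) ∩ B ⊆ insert x (S ∩ B) := by
          intro y hy
          have := Finset.mem_inter.1 hy
          rcases Finset.mem_insert.1 this.1 with rfl | hyS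
          · exact Finset.mem_insert_self _ _
          · exact Finset.mem_insert_of_mem (Finset.mem_inter.2 ⟨hyS, this.2⟩)
        calc ((insert x S) ∩ B).card ≤ (insert x (S ∩ B)).card := Finset.card_le_card this
        _ ≤ (S ∩ B).card + 1 := Finset.card_insert_le _ _
      have h2 : rN (B \ insert x S) ≤ rN (B \ S) :=
        hN.mono (fun y hy => by
          have := Finset.mem_sdiff.1 hy
          exact Finset.mem_sdiff.2 ⟨this.1, fun hm => this.2 (Finset.mem_insert_of_mem hm)⟩)
      omega
    · have h1 : (insert x S) ∩ B = S ∩ B := by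
        ext y; simp only [Finset.mem_inter, Finset.mem_insert]
        constructor
        · rintro ⟨rfl | hyS, hyB⟩
          · exact absurd hyB hxB
          · exact ⟨hyS, hyB⟩
        · rintro ⟨hyS, hyB⟩; exact ⟨Or.inr hyS, hyB⟩
      have h2 : B \ insert x S = B \ S := by
        ext y; simp only [Finset.mem_sdiff, Finset.mem_insert, not_or]
        constructor
        · rintro ⟨hyB, _, h⟩; exact ⟨hyB, h⟩
        · rintro ⟨hyB, h⟩; exact ⟨hyB, fun hya => hxB (hya ▸ hyB), h⟩
      rw [h1, h2]
      omega
  · intro S T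
    have hcards : ((S ∪ T) ∩ B).card + ((S ∩ T) ∩ B).card = (S ∩ B).card + (T ∩ B).card := by
      have h1 : (S ∪ T) ∩ B = (S ∩ B) ∪ (T ∩ B) := by
        ext y; simp only [Finset.mem_inter, Finset.mem_union]; tauto
      have h2 : (S ∩ T) ∩ B = (S ∩ B) ∩ (T ∩ B) := by
        ext y; simp only [Finset.mem_inter]; tauto
      rw [h1, h2]
      exact Finset.card_union_add_card_inter _ _
    have hr : rN (B \ (S ∩ T)) + rN (B \ (S ∪ T)) ≤ rN (B \ S) + rN (B \ T) := by
      have h1 : (B \ S) ∪ (B \ T) = B \ (S ∩ T) := by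
        ext y; simp only [Finset.mem_union, Finset.mem_sdiff, Finset.mem_inter]; tauto
      have h2 : (B \ S) ∩ (B \ T) = B \ (S ∪ T) := by
        ext y; simp only [Finset.mem_inter, Finset.mem_sdiff, Finset.mem_union]; tauto
      have := hN.submod (B \ S) (B \ T)
      rw [h1, h2] at this
      exact this
    have s1 := safety (S ∪ T)
    have s2 := safety (S ∩ T)
    have s3 := safety S
    have s4 := safety T
    omega

/-- Partition corollary: if a set satisfies the two-rank density condition, it splits
into an independent part for `rM` and an independent part for `rN`. -/
theorem polyrank_partition {rM rN : Finset α → ℕ}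
    (hM : IsPolyRank rM) (hN : IsPolyRank rN) (B : Finset α)
    (hyp : ∀ T ⊆ B, T.card ≤ rM T + rN T) :
    ∃ I ⊆ B, rM I = I.card ∧ rN (B \ I) = (B \ I).card := by
  classical
  set r₂ : Finset α → ℕ := fun S => (S ∩ B).card + rN (B \ S) - rN B with hr₂
  have h₂ : IsPolyRank r₂ := isPolyRank_dual hN B
  have hNB : rN B ≤ B.card := hN.le_card B
  set t : ℕ := B.card - rN B with htdef
  have hint : ∀ T ⊆ B, t ≤ rM T + r₂ (B \ T) := by
    intro T hT
    have hd : B \ (B \ T) = T := Finset.sdiff_sdiff_eq_self hT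
    have hcap : (B \ T) ∩ B = B \ T := Finset.inter_eq_left.2 (Finset.sdiff_subset)
    have hcsd : (B \ T).card = B.card - T.card := Finset.card_sdiff_of_subset hT
    have hTB : T.card ≤ B.card := Finset.card_le_card hT
    have hyT := hyp T hT
    have hsafe : rN B ≤ rN T + (B \ T).card := by
      have h1 : T ∪ (B \ T) = B := Finset.union_sdiff_of_subset hT
      have := hN.le_add_card T (B \ T)
      rw [h1] at this
      omega
    simp only [hr₂, hd, hcap]
    omega
  obtain ⟨I, hIB, hIM, hI₂, hIcard⟩ := polymatroid_intersection hM h₂ B t hint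
  refine ⟨I, hIB, hIM, ?_⟩
  have hIBi : I ∩ B = I := Finset.inter_eq_left.2 hIB
  have hsafe : rN B ≤ rN (B \ I) + I.card := by
    have h1 : (B \ I) ∪ I = B := by
      ext y; simp only [Finset.mem_union, Finset.mem_sdiff]
      constructor
      · rintro (⟨h, _⟩ | h)
        · exact h
        · exact hIB h
      · intro hy; by_cases hyI : y ∈ I
        · exact Or.inr hyI
        · exact Or.inl ⟨hy, hyI⟩
    have := hN.le_add_card (B \ I) I
    rw [h1] at this
    omega
  simp only [hr₂, hIBi] at hI₂
  have hcsd : (B \ I).card = B.card - I.card := Finset.card_sdiff_of_subset hIB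
  have hIle : I.card ≤ B.card := Finset.card_le_card hIB
  omega


open IsPolyRank in
/-- Rado-type theorem: a polymatroid has a "basis" avoiding more than `c v` elements
from each of a family of pairwise disjoint classes, provided the rank of the ground
set minus any union of classes is large enough. -/
theorem polyrank_rado {ι : Type*} [DecidableEq ι] {r : Finset α → ℕ} (h : IsPolyRank r)
    (c : ι → ℕ) (t : ℕ) (X : Finset ι) (Ev : ι → Finset α) (E : Finset α)
    (hEv : ∀ v ∈ X, Ev v ⊆ E)
    (hdisj : ∀ u ∈ X, ∀ v ∈ X, u ≠ v → Disjoint (Ev u) (Ev v))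
    (hyp : ∀ Y ⊆ X, t ≤ r (E \ Y.biUnion Ev) + ∑ u ∈ Y, c u) :
    ∃ B ⊆ E, r B = B.card ∧ B.card = t ∧ ∀ v ∈ X, (B ∩ Ev v).card ≤ c v := by
  classical
  generalize hM : (∑ v ∈ X, ((Ev v).card + 1)) = M
  induction M using Nat.strong_induction_on generalizing X Ev E with
  | _ M ih =>
  rcases Finset.eq_empty_or_nonempty X with hXe | hXne
  · -- no classes: just produce an independent set of size t
    subst hXe
    have ht : t ≤ r E := by simpa using hyp ∅ (by simp)
    obtain ⟨B₀, hB₀E, hB₀i, hB₀r⟩ := h.exists_basis E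
    obtain ⟨B, hBB₀, hBi, hBc⟩ := h.indep_trim hB₀i (t := t) (by omega)
    exact ⟨B, hBB₀.trans hB₀E, hBi, hBc, by simp⟩
  by_cases hsmall : ∃ v ∈ X, (Ev v).card ≤ c v
  · -- a class that can never be violated: drop it
    obtain ⟨v, hvX, hvc⟩ := hsmall
    have hyp' : ∀ Y ⊆ X.erase v, t ≤ r (E \ Y.biUnion Ev) + ∑ u ∈ Y, c u :=
      fun Y hY => hyp Y (hY.trans (Finset.erase_subset v X))
    have hMlt : ∑ u ∈ X.erase v, ((Ev u).card + 1) < M := by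
      rw [← hM, ← Finset.sum_erase_add X _ hvX]
      omega
    obtain ⟨B, hBE, hBi, hBc, hBcap⟩ :=
      ih _ hMlt (X.erase v) Ev E
        (fun u hu => hEv u (Finset.mem_of_mem_erase hu))
        (fun u hu w hw huw => hdisj u (Finset.mem_of_mem_erase hu)
          w (Finset.mem_of_mem_erase hw) huw)
        hyp' rfl
    refine ⟨B, hBE, hBi, hBc, fun u hu => ?_⟩
    by_cases huv : u = v
    · subst huv
      calc (B ∩ Ev u).card ≤ (Ev u).card := Finset.card_le_card (Finset.inter_subset_right)
      _ ≤ c u := hvc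
    · exact hBcap u (Finset.mem_erase.2 ⟨huv, hu⟩)
  push_neg at hsmall
  obtain ⟨v, hvX⟩ := hXne
  have hvbig : c v < (Ev v).card := hsmall v hvX
  have hvne : (Ev v).Nonempty := Finset.card_pos.1 (by omega)
  have hxnotD : ∀ (x : α), x ∈ Ev v → ∀ (Y : Finset ι), Y ⊆ X → v ∉ Y →
      x ∉ Y.biUnion Ev := by
    intro x hx Y hYX hvY hmem
    obtain ⟨u, huY, hxu⟩ := Finset.mem_biUnion.1 hmem
    have huv : u ≠ v := fun e => hvY (e ▸ huY)
    exact Finset.disjoint_left.1 (hdisj u (hYX huY) v hvX huv) hxu hx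
  by_cases hcase : ∃ x ∈ Ev v,
      ∀ Y ⊆ X, v ∉ Y → t ≤ r ((E \ Y.biUnion Ev).erase x) + ∑ u ∈ Y, c u
  · -- we may delete x from the ground set
    obtain ⟨x, hxv, hok⟩ := hcase
    have hxE : x ∈ E := hEv v hvX hxv
    set E' := E.erase x with hE'
    set Ev' : ι → Finset α := Function.update Ev v ((Ev v).erase x) with hEv'def
    have hEv'v : Ev' v = (Ev v).erase x := by simp [hEv'def]
    have hEv'u : ∀ u, u ≠ v → Ev' u = Ev u := by
      intro u hu; simp [hEv'def, Function.update_of_ne hu]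
    have hxEvu : ∀ u ∈ X, u ≠ v → x ∉ Ev u := by
      intro u hu huv hmem
      exact Finset.disjoint_left.1 (hdisj u hu v hvX huv) hmem hxv
    have hbiU : ∀ Y ⊆ X, Y.biUnion Ev' = (Y.biUnion Ev).erase x := by
      intro Y hYX
      ext y
      simp only [Finset.mem_biUnion, Finset.mem_erase]
      constructor
      · rintro ⟨u, huY, hyu⟩
        by_cases huv : u = v
        · subst huv
          rw [hEv'v] at hyu
          have := Finset.mem_erase.1 hyu
          exact ⟨this.1, u, huY, this.2⟩
        · rw [hEv'u u huv] at hyu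
          exact ⟨fun hyx => hxEvu u (hYX huY) huv (hyx ▸ hyu), u, huY, hyu⟩
      · rintro ⟨hyx, u, huY, hyu⟩
        refine ⟨u, huY, ?_⟩
        by_cases huv : u = v
        · subst huv; rw [hEv'v]; exact Finset.mem_erase.2 ⟨hyx, hyu⟩
        · rw [hEv'u u huv]; exact hyu
    have hyp' : ∀ Y ⊆ X, t ≤ r (E' \ Y.biUnion Ev') + ∑ u ∈ Y, c u := by
      intro Y hYX
      rw [hbiU Y hYX]
      by_cases hvY : v ∈ Y
      · -- x is inside the removed classes: nothing changes
        have hxD : x ∈ Y.biUnion Ev := Finset.mem_biUnion.2 ⟨v, hvY, hxv⟩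
        have hset : E' \ (Y.biUnion Ev).erase x = E \ Y.biUnion Ev := by
          ext y
          simp only [hE', Finset.mem_sdiff, Finset.mem_erase]
          constructor
          · rintro ⟨⟨hyx, hyE⟩, hyD⟩
            exact ⟨hyE, fun hm => hyD ⟨hyx, hm⟩⟩
          · rintro ⟨hyE, hyD⟩
            have hyx : y ≠ x := fun e => hyD (e ▸ hxD)
            exact ⟨⟨hyx, hyE⟩, fun hm => hyD hm.2⟩
        rw [hset]
        exact hyp Y hYX
      · have hxD : x ∉ Y.biUnion Ev := hxnotD x hxv Y hYX hvY
        have hset : E' \ (Y.biUnion Ev).erase x = (E \ Y.biUnion Ev).erase x := by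
          ext y
          simp only [hE', Finset.mem_sdiff, Finset.mem_erase]
          tauto
        rw [hset]
        exact hok Y hYX hvY
    have hMlt : ∑ u ∈ X, ((Ev' u).card + 1) < M := by
      rw [← hM]
      rw [← Finset.sum_erase_add X (fun u => ((Ev u).card + 1)) hvX,
        ← Finset.sum_erase_add X (fun u => ((Ev' u).card + 1)) hvX]
      have h1 : ∑ u ∈ X.erase v, ((Ev' u).card + 1) = ∑ u ∈ X.erase v, ((Ev u).card + 1) :=
        Finset.sum_congr rfl fun u hu => by
          rw [hEv'u u (Finset.mem_erase.1 hu).1]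
      rw [h1, hEv'v, Finset.card_erase_of_mem hxv]
      have := Finset.card_pos.2 ⟨x, hxv⟩
      omega
    obtain ⟨B, hBE, hBi, hBc, hBcap⟩ :=
      ih _ hMlt X Ev' E'
        (by
          intro u hu
          by_cases huv : u = v
          · subst huv; rw [hEv'v, hE']
            exact Finset.erase_subset_erase x (hEv u hu)
          · rw [hEv'u u huv, hE']
            intro y hy
            exact Finset.mem_erase.2 ⟨fun hyx => hxEvu u hu huv (hyx ▸ hy), hEv u hu hy⟩)
        (by
          intro u hu w hw huw
          have : Ev' u ⊆ Ev u := by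
            by_cases h' : u = v
            · subst h'; rw [hEv'v]; exact Finset.erase_subset x _
            · rw [hEv'u u h']
          have h2 : Ev' w ⊆ Ev w := by
            by_cases h' : w = v
            · subst h'; rw [hEv'v]; exact Finset.erase_subset x _
            · rw [hEv'u w h']
          exact Finset.disjoint_of_subset_left this
            (Finset.disjoint_of_subset_right h2 (hdisj u hu w hw huw)))
        hyp' rfl
    refine ⟨B, hBE.trans (Finset.erase_subset x E), hBi, hBc, fun u hu => ?_⟩
    by_cases huv : u = v
    · subst huv
      have hxB : x ∉ B := fun hm => (Finset.mem_erase.1 (hBE hm)).1 rfl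
      have : B ∩ Ev u = B ∩ Ev' u := by
        rw [hEv'v]
        ext y
        simp only [Finset.mem_inter, Finset.mem_erase]
        exact ⟨fun ⟨h1, h2⟩ => ⟨h1, fun e => hxB (e ▸ h1), h2⟩, fun ⟨h1, _, h2⟩ => ⟨h1, h2⟩⟩
      rw [this]
      exact hBcap u hu
    · rw [← hEv'u u huv]
      exact hBcap u hu
  -- every element of the class `Ev v` is blocked: derive a contradiction
  exfalso
  push_neg at hcase
  -- for every x there is a tight blocking set
  have hblock : ∀ x ∈ Ev v, ∃ Y, Y ⊆ X ∧ v ∉ Y ∧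
      (r (E \ Y.biUnion Ev) + ∑ u ∈ Y, c u = t) ∧
      r ((E \ Y.biUnion Ev).erase x) + 1 ≤ r (E \ Y.biUnion Ev) := by
    intro x hx
    obtain ⟨Y, hYX, hvY, hlt⟩ := hcase x hx
    have hge := hyp Y hYX
    have hxS : x ∈ E \ Y.biUnion Ev :=
      Finset.mem_sdiff.2 ⟨hEv v hvX hx, hxnotD x hx Y hYX hvY⟩
    have hstep : r (E \ Y.biUnion Ev) ≤ r ((E \ Y.biUnion Ev).erase x) + 1 := by
      have := h.step ((E \ Y.biUnion Ev).erase x) x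
      rw [Finset.insert_erase hxS] at this
      exact this
    exact ⟨Y, hYX, hvY, by omega, by omega⟩
  -- tight sets are closed under unions
  have huncross : ∀ Y Y', Y ⊆ X → Y' ⊆ X → v ∉ Y → v ∉ Y' →
      (r (E \ Y.biUnion Ev) + ∑ u ∈ Y, c u = t) →
      (r (E \ Y'.biUnion Ev) + ∑ u ∈ Y', c u = t) →
      (r (E \ (Y ∪ Y').biUnion Ev) + ∑ u ∈ Y ∪ Y', c u = t) := by
    intro Y Y' hYX hY'X hvY hvY' htY htY'
    have hsub : (Y ∪ Y').biUnion Ev = Y.biUnion Ev ∪ Y'.biUnion Ev := by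
      ext y; simp only [Finset.mem_biUnion, Finset.mem_union]
      constructor
      · rintro ⟨u, hu | hu, hyu⟩
        · exact Or.inl ⟨u, hu, hyu⟩
        · exact Or.inr ⟨u, hu, hyu⟩
      · rintro (⟨u, hu, hyu⟩ | ⟨u, hu, hyu⟩)
        · exact ⟨u, Or.inl hu, hyu⟩
        · exact ⟨u, Or.inr hu, hyu⟩
    have hint : (Y ∩ Y').biUnion Ev = Y.biUnion Ev ∩ Y'.biUnion Ev := by
      ext y; simp only [Finset.mem_biUnion, Finset.mem_inter]
      constructor
      · rintro ⟨u, ⟨hu1, hu2⟩, hyu⟩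
        exact ⟨⟨u, hu1, hyu⟩, ⟨u, hu2, hyu⟩⟩
      · rintro ⟨⟨u, hu, hyu⟩, ⟨u', hu', hyu'⟩⟩
        have huu' : u = u' := by
          by_contra hne
          exact Finset.disjoint_left.1 (hdisj u (hYX hu) u' (hY'X hu') hne) hyu hyu'
        exact ⟨u, ⟨hu, huu' ▸ hu'⟩, hyu⟩
    have hs1 : E \ (Y ∪ Y').biUnion Ev = (E \ Y.biUnion Ev) ∩ (E \ Y'.biUnion Ev) := by
      rw [hsub]; ext y
      simp only [Finset.mem_sdiff, Finset.mem_inter, Finset.mem_union]; tauto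
    have hs2 : E \ (Y ∩ Y').biUnion Ev = (E \ Y.biUnion Ev) ∪ (E \ Y'.biUnion Ev) := by
      rw [hint]; ext y
      simp only [Finset.mem_sdiff, Finset.mem_union, Finset.mem_inter]; tauto
    have hsubmod := h.submod (E \ Y.biUnion Ev) (E \ Y'.biUnion Ev)
    rw [← hs1, ← hs2] at hsubmod
    have hsum : ∑ u ∈ Y ∪ Y', c u + ∑ u ∈ Y ∩ Y', c u = ∑ u ∈ Y, c u + ∑ u ∈ Y', c u :=
      Finset.sum_union_inter
    have hup : t ≤ r (E \ (Y ∪ Y').biUnion Ev) + ∑ u ∈ Y ∪ Y', c u :=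
      hyp (Y ∪ Y') (Finset.union_subset hYX hY'X)
    have hdown : t ≤ r (E \ (Y ∩ Y').biUnion Ev) + ∑ u ∈ Y ∩ Y', c u :=
      hyp (Y ∩ Y') ((Finset.inter_subset_left).trans hYX)
    omega
  -- build one tight set that blocks every element of `Ev v`
  have hmain : ∀ s ⊆ Ev v, ∃ Y, Y ⊆ X ∧ v ∉ Y ∧
      (r (E \ Y.biUnion Ev) + ∑ u ∈ Y, c u = t) ∧
      ∀ x ∈ s, r ((E \ Y.biUnion Ev).erase x) + 1 ≤ r (E \ Y.biUnion Ev) := by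
    intro s hs
    induction s using Finset.induction_on with
    | empty =>
      obtain ⟨x₀, hx₀⟩ := hvne
      obtain ⟨Y, a, b, cc, _⟩ := hblock x₀ hx₀
      exact ⟨Y, a, b, cc, by simp⟩
    | @insert x s hxs ihs =>
      have hxEv : x ∈ Ev v := hs (Finset.mem_insert_self x s)
      obtain ⟨Y₁, hY₁X, hvY₁, ht₁, hco₁⟩ := ihs ((Finset.subset_insert x s).trans hs)
      obtain ⟨Y₂, hY₂X, hvY₂, ht₂, hco₂⟩ := hblock x hxEv
      set Y := Y₁ ∪ Y₂ with hYdef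
      have hYX : Y ⊆ X := Finset.union_subset hY₁X hY₂X
      have hvY : v ∉ Y := fun hm => (Finset.mem_union.1 hm).elim hvY₁ hvY₂
      have htY := huncross Y₁ Y₂ hY₁X hY₂X hvY₁ hvY₂ ht₁ ht₂
      refine ⟨Y, hYX, hvY, htY, ?_⟩
      intro y hy
      have hSsub₁ : E \ Y.biUnion Ev ⊆ E \ Y₁.biUnion Ev := by
        intro z hz
        have := Finset.mem_sdiff.1 hz
        refine Finset.mem_sdiff.2 ⟨this.1, fun hm => this.2 ?_⟩
        obtain ⟨u, hu, hzu⟩ := Finset.mem_biUnion.1 hm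
        exact Finset.mem_biUnion.2 ⟨u, Finset.mem_union_left _ hu, hzu⟩
      have hSsub₂ : E \ Y.biUnion Ev ⊆ E \ Y₂.biUnion Ev := by
        intro z hz
        have := Finset.mem_sdiff.1 hz
        refine Finset.mem_sdiff.2 ⟨this.1, fun hm => this.2 ?_⟩
        obtain ⟨u, hu, hzu⟩ := Finset.mem_biUnion.1 hm
        exact Finset.mem_biUnion.2 ⟨u, Finset.mem_union_right _ hu, hzu⟩
      have hyS : y ∈ E \ Y.biUnion Ev := Finset.mem_sdiff.2
        ⟨hEv v hvX (hs hy), hxnotD y (hs hy) Y hYX hvY⟩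
      rcases Finset.mem_insert.1 hy with rfl | hys
      · exact h.coloop_subset hSsub₂ hyS (hco₂)
      · exact h.coloop_subset hSsub₁ hyS (hco₁ y hys)
  obtain ⟨Y, hYX, hvY, htY, hcoY⟩ := hmain (Ev v) (le_refl _)
  set S := E \ Y.biUnion Ev with hSdef
  have hEvS : Ev v ⊆ S := fun y hy =>
    Finset.mem_sdiff.2 ⟨hEv v hvX hy, hxnotD y hy Y hYX hvY⟩
  have hdel := h.coloops_delete hEvS hcoY
  have hinsY : t ≤ r (S \ Ev v) + ∑ u ∈ Y, c u + c v := by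
    have hsub : (insert v Y).biUnion Ev = Ev v ∪ Y.biUnion Ev := Finset.biUnion_insert
    have hset : E \ (insert v Y).biUnion Ev = S \ Ev v := by
      rw [hsub, hSdef]
      ext y
      simp only [Finset.mem_sdiff, Finset.mem_union]; tauto
    have := hyp (insert v Y) (Finset.insert_subset hvX hYX)
    rw [hset, Finset.sum_insert hvY] at this
    omega
  omega

section Graph
open SimpleGraph
variable {V : Type*} [Fintype V] [DecidableEq V]

/-- Two graphs with the same reachability relation have equivalent sets of
connected components. -/
def ccEquiv {G H : SimpleGraph V} (h : ∀ x y, G.Reachable x y ↔ H.Reachable x y) :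
    G.ConnectedComponent ≃ H.ConnectedComponent where
  toFun := Quot.map id (fun x y hxy => (h x y).1 hxy)
  invFun := Quot.map id (fun x y hxy => (h x y).2 hxy)
  left_inv := by rintro ⟨x⟩; rfl
  right_inv := by rintro ⟨x⟩; rfl

/-- The graph on `V` with edge finset `S`. -/
abbrev grf (S : Finset (Sym2 V)) : SimpleGraph V := SimpleGraph.fromEdgeSet ↑S

/-- Number of connected components of the graph with edge set `S`. -/
noncomputable def ncomp (S : Finset (Sym2 V)) : ℕ := Nat.card (grf S).ConnectedComponent

theorem grf_mono {S T : Finset (Sym2 V)} (h : S ⊆ T) : grf S ≤ grf T :=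
  SimpleGraph.fromEdgeSet_mono (by exact_mod_cast h)

theorem reach_insert_iff {S : Finset (Sym2 V)} {a b x y : V} :
    (grf (insert s(a,b) S)).Reachable x y ↔
      (grf S).Reachable x y ∨ ((grf S).Reachable x a ∧ (grf S).Reachable b y) ∨
        ((grf S).Reachable x b ∧ (grf S).Reachable a y) := by
  constructor
  · rintro ⟨w⟩
    induction w with
    | nil => exact Or.inl (Reachable.refl _)
    | @cons u v z huv p ih =>
      have huv' := (SimpleGraph.fromEdgeSet_adj _).1 huv
      have hne : u ≠ v := huv'.2
      have hmem : s(u,v) ∈ insert s(a,b) S := by exact_mod_cast huv'.1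
      rcases Finset.mem_insert.1 hmem with heq | hS
      · -- the new edge
        rcases Sym2.eq_iff.1 heq with ⟨rfl, rfl⟩ | ⟨rfl, rfl⟩
        · -- u = a, v = b
          rcases ih with h1 | ⟨h2, h3⟩ | ⟨h2, h3⟩
          · exact Or.inr (Or.inl ⟨Reachable.refl _, h1⟩)
          · exact Or.inr (Or.inl ⟨Reachable.refl _, h3⟩)
          · exact Or.inl h3
        · -- u = b, v = a
          rcases ih with h1 | ⟨h2, h3⟩ | ⟨h2, h3⟩
          · exact Or.inr (Or.inr ⟨Reachable.refl _, h1⟩)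
          · exact Or.inl h3
          · exact Or.inr (Or.inr ⟨Reachable.refl _, h3⟩)
      · have huvS : (grf S).Reachable u v :=
          SimpleGraph.Adj.reachable ((SimpleGraph.fromEdgeSet_adj _).2 ⟨by exact_mod_cast hS, hne⟩)
        rcases ih with h1 | ⟨h2, h3⟩ | ⟨h2, h3⟩
        · exact Or.inl (huvS.trans h1)
        · exact Or.inr (Or.inl ⟨huvS.trans h2, h3⟩)
        · exact Or.inr (Or.inr ⟨huvS.trans h2, h3⟩)
  · have hmono : grf S ≤ grf (insert s(a,b) S) := grf_mono (Finset.subset_insert _ S)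
    rintro (h1 | ⟨h2, h3⟩ | ⟨h2, h3⟩)
    · exact h1.mono hmono
    · -- x ~ a, b ~ y ; either a = b or a-b is an edge
      by_cases hab : a = b
      · subst hab
        exact ((h2.trans h3.symm.symm).mono hmono : _)
      · have hadj : (grf (insert s(a,b) S)).Adj a b :=
          (SimpleGraph.fromEdgeSet_adj _).2 ⟨by simp, hab⟩
        exact ((h2.mono hmono).trans (hadj.reachable.trans (h3.mono hmono)))
    · by_cases hab : a = b
      · subst hab
        exact ((h2.trans h3.symm.symm).mono hmono : _)
      · have hadj : (grf (insert s(a,b) S)).Adj b a :=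
          (SimpleGraph.fromEdgeSet_adj _).2 ⟨by simp, Ne.symm hab⟩
        exact ((h2.mono hmono).trans (hadj.reachable.trans (h3.mono hmono)))

theorem ncomp_insert_of_reachable {S : Finset (Sym2 V)} {a b : V}
    (h : (grf S).Reachable a b) : ncomp (insert s(a,b) S) = ncomp S := by
  have hiff : ∀ x y, (grf (insert s(a,b) S)).Reachable x y ↔ (grf S).Reachable x y := by
    intro x y
    rw [reach_insert_iff]
    constructor
    · rintro (h1 | ⟨h2, h3⟩ | ⟨h2, h3⟩)
      · exact h1
      · exact (h2.trans h).trans h3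
      · exact (h2.trans h.symm).trans h3
    · exact fun h1 => Or.inl h1
  exact Nat.card_congr (ccEquiv hiff)

theorem ncomp_insert_of_not_reachable {S : Finset (Sym2 V)} {a b : V}
    (hab : a ≠ b) (h : ¬ (grf S).Reachable a b) :
    ncomp (insert s(a,b) S) + 1 = ncomp S := by
  classical
  set G₀ := grf S with hG₀
  set G₁ := grf (insert s(a,b) S) with hG₁
  have hfin : Finite G₀.ConnectedComponent := Quot.finite _
  have hfin1 : Finite G₁.ConnectedComponent := Quot.finite _
  -- the natural surjection
  set f : G₀.ConnectedComponent → G₁.ConnectedComponent :=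
    Quot.map id (fun x y hxy => hxy.mono (grf_mono (Finset.subset_insert _ S))) with hf
  have hfmk : ∀ x : V, f (G₀.connectedComponentMk x) = G₁.connectedComponentMk x := by
    intro x; rfl
  set bc := G₀.connectedComponentMk b with hbc
  have key : ∀ c₁ c₂ : G₀.ConnectedComponent, c₁ ≠ bc → c₂ ≠ bc → f c₁ = f c₂ → c₁ = c₂ := by
    rintro ⟨x⟩ ⟨y⟩ h1 h2 heq
    have hr : G₁.Reachable x y := (SimpleGraph.ConnectedComponent.eq).1 heq
    rcases reach_insert_iff.1 hr with hh | ⟨hh1, hh2⟩ | ⟨hh1, hh2⟩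
    · exact SimpleGraph.ConnectedComponent.sound hh
    · exact absurd (SimpleGraph.ConnectedComponent.sound hh2.symm) h2
    · exact absurd (SimpleGraph.ConnectedComponent.sound hh1) h1
  have hsurj : ∀ d : G₁.ConnectedComponent, ∃ c : G₀.ConnectedComponent, c ≠ bc ∧ f c = d := by
    rintro ⟨x⟩
    by_cases hx : G₀.connectedComponentMk x = bc
    · refine ⟨G₀.connectedComponentMk a, ?_, ?_⟩
      · intro hcon
        exact h ((SimpleGraph.ConnectedComponent.eq).1 hcon)
      · rw [hfmk]
        have hrb : G₀.Reachable x b := (SimpleGraph.ConnectedComponent.eq).1 hx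
        apply SimpleGraph.ConnectedComponent.sound
        apply reach_insert_iff.2
        exact Or.inr (Or.inl ⟨Reachable.refl _, hrb.symm⟩)
    · exact ⟨G₀.connectedComponentMk x, hx, rfl⟩
  -- bijection between the subtype and the components of the bigger graph
  have : Nat.card {c : G₀.ConnectedComponent // c ≠ bc} = Nat.card G₁.ConnectedComponent := by
    apply Nat.card_eq_of_bijective (fun c => f c.1)
    constructor
    · rintro ⟨c₁, h1⟩ ⟨c₂, h2⟩ heq
      exact Subtype.ext (key c₁ c₂ h1 h2 heq)
    · intro d
      obtain ⟨c, hc, hfc⟩ := hsurj d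
      exact ⟨⟨c, hc⟩, hfc⟩
  have hcard : Nat.card {c : G₀.ConnectedComponent // c ≠ bc} + 1 =
      Nat.card G₀.ConnectedComponent := by
    letI : Fintype G₀.ConnectedComponent := Fintype.ofFinite _
    have h2 : Fintype.card {c : G₀.ConnectedComponent // ¬ (c = bc)} =
        Fintype.card G₀.ConnectedComponent - Fintype.card {c : G₀.ConnectedComponent // c = bc} :=
      Fintype.card_subtype_compl _
    have h1 : Fintype.card {c : G₀.ConnectedComponent // c = bc} = 1 :=
      Fintype.card_subtype_eq bc
    have h3 : 0 < Fintype.card G₀.ConnectedComponent :=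
      Fintype.card_pos_iff.2 ⟨bc⟩
    have h4 : Nat.card {c : G₀.ConnectedComponent // c ≠ bc} =
        Fintype.card {c : G₀.ConnectedComponent // ¬ (c = bc)} := by
      rw [Nat.card_eq_fintype_card]
    rw [h4, Nat.card_eq_fintype_card]
    omega
  show Nat.card G₁.ConnectedComponent + 1 = Nat.card G₀.ConnectedComponent
  omega

theorem ncomp_empty : ncomp (∅ : Finset (Sym2 V)) = Fintype.card V := by
  have hiff : ∀ x y : V, (grf (∅ : Finset (Sym2 V))).Reachable x y ↔ x = y := by
    intro x y
    constructor
    · intro hr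
      have hbot : grf (∅ : Finset (Sym2 V)) = (⊥ : SimpleGraph V) := by
        ext x y
        simp [SimpleGraph.fromEdgeSet_adj]
      rw [hbot] at hr
      exact SimpleGraph.reachable_bot.1 hr
    · rintro rfl; exact Reachable.refl _
  unfold ncomp
  have : Nat.card (grf (∅ : Finset (Sym2 V))).ConnectedComponent = Nat.card V := by
    apply Nat.card_congr
    refine ⟨Quot.lift id (fun x y hxy => hiff x y |>.1 hxy), fun v => Quot.mk _ v, ?_, ?_⟩
    · rintro ⟨x⟩; rfl
    · intro v; rfl
  rw [this, Nat.card_eq_fintype_card]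

theorem ncomp_pos [Nonempty V] (S : Finset (Sym2 V)) : 0 < ncomp S := by
  obtain ⟨v⟩ := (inferInstance : Nonempty V)
  letI : Nonempty (grf S).ConnectedComponent := ⟨(grf S).connectedComponentMk v⟩
  letI : Finite (grf S).ConnectedComponent := Quot.finite _
  exact Nat.card_pos

theorem ncomp_le_insert (S : Finset (Sym2 V)) (e : Sym2 V) :
    ncomp S ≤ ncomp (insert e S) + 1 := by
  induction e with
  | _ a b =>
    by_cases hab : a = b
    · subst hab
      have hiff : ∀ x y, (grf (insert s(a,a) S)).Reachable x y ↔ (grf S).Reachable x y := by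
        intro x y
        rw [reach_insert_iff]
        constructor
        · rintro (h1 | ⟨h2, h3⟩ | ⟨h2, h3⟩) <;> [exact h1; exact h2.trans h3; exact h2.trans h3]
        · exact fun h1 => Or.inl h1
      rw [ncomp, ncomp, Nat.card_congr (ccEquiv hiff)]
      omega
    · by_cases hr : (grf S).Reachable a b
      · rw [ncomp_insert_of_reachable hr]; omega
      · rw [← ncomp_insert_of_not_reachable hab hr]

theorem ncomp_insert_le (S : Finset (Sym2 V)) (e : Sym2 V) :
    ncomp (insert e S) ≤ ncomp S := by
  induction e with
  | _ a b =>
    by_cases hab : a = b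
    · subst hab
      have hiff : ∀ x y, (grf (insert s(a,a) S)).Reachable x y ↔ (grf S).Reachable x y := by
        intro x y
        rw [reach_insert_iff]
        constructor
        · rintro (h1 | ⟨h2, h3⟩ | ⟨h2, h3⟩) <;> [exact h1; exact h2.trans h3; exact h2.trans h3]
        · exact fun h1 => Or.inl h1
      rw [ncomp, ncomp, Nat.card_congr (ccEquiv hiff)]
    · by_cases hr : (grf S).Reachable a b
      · rw [ncomp_insert_of_reachable hr]
      · have := ncomp_insert_of_not_reachable hab hr
        omega

end Graph

section Graph2
open SimpleGraph
variable {V : Type*} [Fintype V] [DecidableEq V]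

theorem ncomp_insert_diag (S : Finset (Sym2 V)) (a : V) :
    ncomp (insert s(a,a) S) = ncomp S := by
  have hiff : ∀ x y, (grf (insert s(a,a) S)).Reachable x y ↔ (grf S).Reachable x y := by
    intro x y
    rw [reach_insert_iff]
    constructor
    · rintro (h1 | ⟨h2, h3⟩ | ⟨h2, h3⟩) <;> [exact h1; exact h2.trans h3; exact h2.trans h3]
    · exact fun h1 => Or.inl h1
  exact Nat.card_congr (ccEquiv hiff)

theorem ncomp_le_card (S : Finset (Sym2 V)) : ncomp S ≤ Fintype.card V := by
  have hsurj : Function.Surjective ((grf S).connectedComponentMk) := Quot.exists_rep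
  calc ncomp S ≤ Nat.card V := Nat.card_le_card_of_surjective _ hsurj
  _ = Fintype.card V := Nat.card_eq_fintype_card

theorem ncomp_union_le (S D : Finset (Sym2 V)) : ncomp (S ∪ D) ≤ ncomp S := by
  classical
  induction D using Finset.induction_on with
  | empty => simp
  | @insert a s ha ih =>
    have : S ∪ insert a s = insert a (S ∪ s) := by
      ext y; simp only [Finset.mem_union, Finset.mem_insert]; tauto
    rw [this]
    exact (ncomp_insert_le (S ∪ s) a).trans ih

theorem ncomp_anti {S T : Finset (Sym2 V)} (h : S ⊆ T) : ncomp T ≤ ncomp S := by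
  have : T = S ∪ (T \ S) := by
    ext y; simp only [Finset.mem_union, Finset.mem_sdiff]; tauto
  rw [this]
  exact ncomp_union_le S (T \ S)

/-- The graphic rank function. -/
noncomputable def rgr (S : Finset (Sym2 V)) : ℕ := Fintype.card V - ncomp S

theorem isPolyRank_rgr : IsPolyRank (rgr (V := V)) := by
  constructor
  · simp [rgr, ncomp_empty]
  · intro S T hST
    have := ncomp_anti hST
    unfold rgr; omega
  · intro S x
    have h1 := ncomp_le_insert S x
    have h2 := ncomp_le_card (insert x S)
    have h3 := ncomp_le_card S
    unfold rgr; omega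
  · -- submodularity via diminishing marginals
    have marginal : ∀ (U W : Finset (Sym2 V)), U ⊆ W → ∀ d,
        rgr (insert d W) + rgr U ≤ rgr W + rgr (insert d U) := by
      intro U W hUW d
      induction d with
      | _ a b =>
        by_cases hab : a = b
        · subst hab
          rw [rgr, rgr, rgr, rgr, ncomp_insert_diag, ncomp_insert_diag]
        · by_cases hrU : (grf U).Reachable a b
          · have hrW : (grf W).Reachable a b := hrU.mono (grf_mono hUW)
            rw [rgr, rgr, rgr, rgr, ncomp_insert_of_reachable hrU,
              ncomp_insert_of_reachable hrW]
          · have h1 := ncomp_insert_of_not_reachable hab hrU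
            by_cases hrW : (grf W).Reachable a b
            · have h2 := ncomp_insert_of_reachable hrW
              have h3 := ncomp_le_card U
              have h4 := ncomp_le_card W
              have h5 := ncomp_le_card (insert s(a,b) U)
              unfold rgr; omega
            · have h2 := ncomp_insert_of_not_reachable hab hrW
              have h3 := ncomp_le_card U
              have h4 := ncomp_le_card W
              unfold rgr; omega
    intro S T
    have key : ∀ (D A B : Finset (Sym2 V)), A ⊆ B →
        rgr (B ∪ D) + rgr A ≤ rgr B + rgr (A ∪ D) := by
      intro D
      induction D using Finset.induction_on with
      | empty => intro A B hAB; simp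
      | @insert d D hd ih =>
        intro A B hAB
        have h1 : B ∪ insert d D = insert d (B ∪ D) := by
          ext y; simp only [Finset.mem_union, Finset.mem_insert]; tauto
        have h2 : A ∪ insert d D = insert d (A ∪ D) := by
          ext y; simp only [Finset.mem_union, Finset.mem_insert]; tauto
        rw [h1, h2]
        have h3 := ih A B hAB
        have h4 := marginal (A ∪ D) (B ∪ D) (Finset.union_subset_union hAB (le_refl D)) d
        omega
    have h5 := key T (S ∩ T) S (Finset.inter_subset_left)
    have h6 : (S ∩ T) ∪ T = T := Finset.union_eq_right.2 (Finset.inter_subset_right)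
    rw [h6] at h5
    omega

theorem rgr_le_pred [Nonempty V] (S : Finset (Sym2 V)) : rgr S ≤ Fintype.card V - 1 := by
  have := ncomp_pos S
  unfold rgr; omega

/-- From an independent edge set (in the rank sense), the graph is acyclic. -/
theorem acyclic_of_rgr_eq_card {S : Finset (Sym2 V)} (h : rgr S = S.card) :
    (grf S).IsAcyclic := by
  by_contra hcyc
  unfold SimpleGraph.IsAcyclic at hcyc
  push_neg at hcyc
  obtain ⟨u, p, hp⟩ := hcyc
  have hlen : 3 ≤ p.length := hp.three_le_length
  have hedges : p.edges ≠ [] := by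
    intro hnil
    have := SimpleGraph.Walk.length_edges p
    rw [hnil] at this
    simp at this
    omega
  obtain ⟨e, he⟩ := List.exists_mem_of_ne_nil p.edges hedges
  induction e with
  | _ v w =>
    have hmem : s(v,w) ∈ (grf S).edgeSet := SimpleGraph.Walk.edges_subset_edgeSet p he
    have hSmem : s(v,w) ∈ S := by
      rw [SimpleGraph.edgeSet_fromEdgeSet] at hmem
      exact_mod_cast hmem.1
    have hadj : (grf S).Adj v w ∧ ((grf S) \ fromEdgeSet {s(v,w)}).Reachable v w := by
      refine SimpleGraph.adj_and_reachable_delete_edges_iff_exists_cycle.2 ?_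
      exact ⟨u, p, hp, he⟩
    have hvw : v ≠ w := hadj.1.ne
    have hGeq : (grf S) \ fromEdgeSet {s(v,w)} = grf (S.erase s(v,w)) := by
      ext x y
      simp only [SimpleGraph.sdiff_adj, SimpleGraph.fromEdgeSet_adj, Set.mem_singleton_iff,
        Finset.coe_erase, Set.mem_diff, Finset.mem_coe]
      constructor
      · rintro ⟨⟨hxyS, hxy⟩, hne⟩
        refine ⟨⟨hxyS, ?_⟩, hxy⟩
        intro heq
        exact hne ⟨heq, hxy⟩
      · rintro ⟨⟨hxyS, hneq⟩, hxy⟩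
        exact ⟨⟨hxyS, hxy⟩, fun hc => hneq hc.1⟩
    rw [hGeq] at hadj
    have hins : insert s(v,w) (S.erase s(v,w)) = S := Finset.insert_erase hSmem
    have hnc : ncomp S = ncomp (S.erase s(v,w)) := by
      conv_lhs => rw [← hins]
      exact ncomp_insert_of_reachable hadj.2
    have hrg : rgr S = rgr (S.erase s(v,w)) := by unfold rgr; rw [hnc]
    have hle : rgr (S.erase s(v,w)) ≤ (S.erase s(v,w)).card :=
      isPolyRank_rgr.le_card _
    rw [Finset.card_erase_of_mem hSmem] at hle
    have hpos : 0 < S.card := Finset.card_pos.2 ⟨_, hSmem⟩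
    omega

/-- Acyclicity gives full rank (edges must be non-loops). -/
theorem rgr_eq_card_of_acyclic {S : Finset (Sym2 V)} (hd : ∀ e ∈ S, ¬ e.IsDiag)
    (h : (grf S).IsAcyclic) : rgr S = S.card := by
  classical
  induction S using Finset.induction_on with
  | empty => simp [rgr, ncomp_empty]
  | @insert e S' he ih =>
    have hsub : grf S' ≤ grf (insert e S') := grf_mono (Finset.subset_insert _ _)
    have hS'acyc : (grf S').IsAcyclic := by
      intro u p hp
      exact h (p.mapLe hsub) (hp.mapLe _)
    have hS'd : ∀ e' ∈ S', ¬ e'.IsDiag := fun e' he' => hd e' (Finset.mem_insert_of_mem he')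
    have hih := ih hS'd hS'acyc
    induction e with
    | _ a b =>
      have hab : a ≠ b := by
        intro heq
        exact hd s(a,b) (Finset.mem_insert_self _ _) (by simp [heq])
      have hnr : ¬ (grf S').Reachable a b := by
        intro hr
        obtain ⟨wp⟩ := hr
        have hedges : ∀ e' ∈ (wp.toPath : (grf S').Walk a b).edges,
            e' ∈ (grf (insert s(a,b) S')).edgeSet := by
          intro e' he'
          have h1 := SimpleGraph.Walk.edges_subset_edgeSet _ he'
          exact SimpleGraph.edgeSet_mono hsub h1
        have hedgesS' : ∀ e' ∈ (wp.toPath : (grf S').Walk a b).edges, e' ∈ (S' : Set (Sym2 V)) := by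
          intro e' he'
          have h1 := SimpleGraph.Walk.edges_subset_edgeSet _ he'
          rw [SimpleGraph.edgeSet_fromEdgeSet] at h1
          exact h1.1
        have htp : ((wp.toPath : (grf S').Walk a b).transfer _ hedges).IsPath :=
          SimpleGraph.Walk.IsPath.transfer _ wp.toPath.2
        have hadj : (grf (insert s(a,b) S')).Adj b a :=
          (SimpleGraph.fromEdgeSet_adj _).2 ⟨by simp [Sym2.eq_swap], Ne.symm hab⟩
        have hnotmem : ¬ s(b,a) ∈ ((wp.toPath : (grf S').Walk a b).transfer _ hedges).edges := by
          rw [SimpleGraph.Walk.edges_transfer]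
          intro hmem
          have h1 := hedgesS' _ hmem
          have h2 : s(b,a) ∈ S' := by exact_mod_cast h1
          rw [Sym2.eq_swap] at h2
          exact he h2
        have hcyc := SimpleGraph.Path.cons_isCycle
          ⟨(wp.toPath : (grf S').Walk a b).transfer _ hedges, htp⟩ hadj hnotmem
        exact h _ hcyc
      have hnc := ncomp_insert_of_not_reachable hab hnr
      have h2 := ncomp_le_card S'
      have h3 := ncomp_le_card (insert s(a,b) S')
      have hcard : (insert s(a,b) S').card = S'.card + 1 := Finset.card_insert_of_notMem he
      have hncpos : 0 < ncomp S' := by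
        have : Nonempty V := ⟨a⟩
        exact ncomp_pos S'
      unfold rgr at *
      omega

theorem connected_of_ncomp_eq_one {S : Finset (Sym2 V)} (h : ncomp S = 1) :
    (grf S).Connected := by
  have hcc : Subsingleton ((grf S).ConnectedComponent) ∧
      Nonempty ((grf S).ConnectedComponent) := by
    constructor
    · rcases Nat.card_eq_one_iff_exists.1 h with ⟨c, hc⟩
      exact ⟨fun x y => (hc x).trans (hc y).symm⟩
    · rcases Nat.card_eq_one_iff_exists.1 h with ⟨c, _⟩
      exact ⟨c⟩
  have hne : Nonempty V := by
    obtain ⟨⟨v⟩⟩ := hcc.2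
    exact ⟨v⟩
  constructor
  intro x y
  have := hcc.1.allEq ((grf S).connectedComponentMk x) ((grf S).connectedComponentMk y)
  exact (SimpleGraph.ConnectedComponent.eq).1 this

theorem ncomp_eq_one_of_connected {S : Finset (Sym2 V)} (h : (grf S).Connected) :
    ncomp S = 1 := by
  have : Subsingleton ((grf S).ConnectedComponent) := by
    constructor
    rintro ⟨x⟩ ⟨y⟩
    exact SimpleGraph.ConnectedComponent.sound (h.preconnected x y)
  have hne : Nonempty ((grf S).ConnectedComponent) := by
    have := h.nonempty
    exact ⟨(grf S).connectedComponentMk (Classical.arbitrary V)⟩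
  unfold ncomp
  rw [Nat.card_eq_one_iff_exists]
  obtain ⟨c⟩ := hne
  exact ⟨c, fun y => this.allEq y c⟩

end Graph2

section Union
variable {α : Type*} [DecidableEq α]

/-- "Convolution" of a set function with cardinality. -/
noncomputable def convRank (q : Finset α → ℕ) (S : Finset α) : ℕ :=
  ((S.powerset).image (fun T => (S \ T).card + q T)).min' (by
    refine Finset.image_nonempty.2 ⟨∅, Finset.empty_mem_powerset S⟩)

theorem convRank_le {q : Finset α → ℕ} {S T : Finset α} (hT : T ⊆ S) :
    convRank q S ≤ (S \ T).card + q T :=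
  Finset.min'_le _ _ (Finset.mem_image.2 ⟨T, Finset.mem_powerset.2 hT, rfl⟩)

theorem exists_convRank_eq (q : Finset α → ℕ) (S : Finset α) :
    ∃ T ⊆ S, convRank q S = (S \ T).card + q T := by
  obtain ⟨x, hx, hmin⟩ := Finset.mem_image.1 (Finset.min'_mem
    ((S.powerset).image (fun T => (S \ T).card + q T)) (by
      refine Finset.image_nonempty.2 ⟨∅, Finset.empty_mem_powerset S⟩))
  exact ⟨x, Finset.mem_powerset.1 hx, hmin.symm⟩

theorem isPolyRank_convRank {q : Finset α → ℕ} (h0 : q ∅ = 0)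
    (hmono : ∀ ⦃S T : Finset α⦄, S ⊆ T → q S ≤ q T)
    (hsub : ∀ S T, q (S ∪ T) + q (S ∩ T) ≤ q S + q T) :
    IsPolyRank (convRank q) := by
  constructor
  · have h1 := convRank_le (q := q) (S := ∅) (T := ∅) (by simp)
    simp [h0] at h1
    omega
  · intro S T hST
    obtain ⟨T₀, hT₀, heq⟩ := exists_convRank_eq q T
    have h1 : convRank q S ≤ (S \ (T₀ ∩ S)).card + q (T₀ ∩ S) :=
      convRank_le (Finset.inter_subset_right)
    have h2 : (S \ (T₀ ∩ S)).card ≤ (T \ T₀).card := by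
      apply Finset.card_le_card
      intro y hy
      have := Finset.mem_sdiff.1 hy
      refine Finset.mem_sdiff.2 ⟨hST this.1, fun hm => this.2 (Finset.mem_inter.2 ⟨hm, this.1⟩)⟩
    have h3 : q (T₀ ∩ S) ≤ q T₀ := hmono (Finset.inter_subset_left)
    omega
  · intro S x
    obtain ⟨T₀, hT₀, heq⟩ := exists_convRank_eq q S
    have h1 : convRank q (insert x S) ≤ ((insert x S) \ T₀).card + q T₀ :=
      convRank_le (hT₀.trans (Finset.subset_insert x S))
    have h2 : ((insert x S) \ T₀).card ≤ (S \ T₀).card + 1 := by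
      have : (insert x S) \ T₀ ⊆ insert x (S \ T₀) := by
        intro y hy
        have := Finset.mem_sdiff.1 hy
        rcases Finset.mem_insert.1 this.1 with rfl | hyS
        · exact Finset.mem_insert_self _ _
        · exact Finset.mem_insert_of_mem (Finset.mem_sdiff.2 ⟨hyS, this.2⟩)
      calc ((insert x S) \ T₀).card ≤ (insert x (S \ T₀)).card := Finset.card_le_card this
      _ ≤ (S \ T₀).card + 1 := Finset.card_insert_le _ _
    omega
  · intro S T
    obtain ⟨A, hA, heqA⟩ := exists_convRank_eq q S
    obtain ⟨B, hB, heqB⟩ := exists_convRank_eq q T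
    have h1 : convRank q (S ∪ T) ≤ ((S ∪ T) \ (A ∪ B)).card + q (A ∪ B) :=
      convRank_le (Finset.union_subset_union hA hB)
    have h2 : convRank q (S ∩ T) ≤ ((S ∩ T) \ (A ∩ B)).card + q (A ∩ B) :=
      convRank_le (Finset.inter_subset_inter hA hB)
    have h3 := hsub A B
    -- cardinality inequality
    have hcard : ((S ∪ T) \ (A ∪ B)).card + ((S ∩ T) \ (A ∩ B)).card ≤
        (S \ A).card + (T \ B).card := by
      set U := (S ∪ T) \ (A ∪ B) with hU
      set W := (S ∩ T) \ (A ∩ B) with hW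
      set P := S \ A with hP
      set Q := T \ B with hQ
      have hUW : U ∪ W ⊆ P ∪ Q := by
        intro y hy
        rcases Finset.mem_union.1 hy with hy | hy
        · have := Finset.mem_sdiff.1 hy
          rcases Finset.mem_union.1 this.1 with h' | h'
          · by_cases hyA : y ∈ A
            · exact absurd (Finset.mem_union_left _ hyA) this.2
            · exact Finset.mem_union_left _ (Finset.mem_sdiff.2 ⟨h', hyA⟩)
          · by_cases hyB : y ∈ B
            · exact absurd (Finset.mem_union_right _ hyB) this.2
            · exact Finset.mem_union_right _ (Finset.mem_sdiff.2 ⟨h', hyB⟩)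
        · have := Finset.mem_sdiff.1 hy
          have hST := Finset.mem_inter.1 this.1
          by_cases hyA : y ∈ A
          · have hyB : y ∉ B := fun hyB => this.2 (Finset.mem_inter.2 ⟨hyA, hyB⟩)
            exact Finset.mem_union_right _ (Finset.mem_sdiff.2 ⟨hST.2, hyB⟩)
          · exact Finset.mem_union_left _ (Finset.mem_sdiff.2 ⟨hST.1, hyA⟩)
      have hUWi : U ∩ W ⊆ P ∩ Q := by
        intro y hy
        have hyU := Finset.mem_sdiff.1 (Finset.mem_inter.1 hy).1
        have hyW := Finset.mem_sdiff.1 (Finset.mem_inter.1 hy).2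
        have hST := Finset.mem_inter.1 hyW.1
        have hyA : y ∉ A := fun hm => hyU.2 (Finset.mem_union_left _ hm)
        have hyB : y ∉ B := fun hm => hyU.2 (Finset.mem_union_right _ hm)
        exact Finset.mem_inter.2 ⟨Finset.mem_sdiff.2 ⟨hST.1, hyA⟩,
          Finset.mem_sdiff.2 ⟨hST.2, hyB⟩⟩
      calc U.card + W.card = (U ∪ W).card + (U ∩ W).card :=
            (Finset.card_union_add_card_inter U W).symm
      _ ≤ (P ∪ Q).card + (P ∩ Q).card :=
            Nat.add_le_add (Finset.card_le_card hUW) (Finset.card_le_card hUWi)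
      _ = P.card + Q.card := Finset.card_union_add_card_inter P Q
    omega

variable {r : Finset α → ℕ}

/-- Iterated union ranks: `rhoRank r j` is the rank function of the `j`-fold
matroid union of (the matroid underlying) `r`. -/
noncomputable def rhoRank (r : Finset α → ℕ) : ℕ → Finset α → ℕ
  | 0 => fun _ => 0
  | j+1 => convRank (fun T => r T + rhoRank r j T)

theorem isPolyRank_rhoRank (h : IsPolyRank r) : ∀ j, IsPolyRank (rhoRank r j)
  | 0 => by
    constructor <;> simp [rhoRank]
  | j+1 => by
    have ih := isPolyRank_rhoRank h j
    refine isPolyRank_convRank ?_ ?_ ?_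
    · rw [h.empty, ih.empty]
    · intro S T hST
      exact Nat.add_le_add (h.mono hST) (ih.mono hST)
    · intro S T
      have h1 := h.submod S T
      have h2 := ih.submod S T
      omega

theorem indep_subset (h : IsPolyRank r) {A B : Finset α} (hBA : B ⊆ A)
    (hA : r A = A.card) : r B = B.card := by
  have h1 : r B ≤ B.card := h.le_card B
  have h2 := h.le_add_card B (A \ B)
  rw [Finset.union_sdiff_of_subset hBA] at h2
  have h3 : (A \ B).card = A.card - B.card := Finset.card_sdiff_of_subset hBA
  have h4 : B.card ≤ A.card := Finset.card_le_card hBA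
  omega

theorem sum_card_split (T : Finset α) :
    ∀ (L : List (Finset α)), (L.map Finset.card).sum =
      ((L.map (· \ T)).map Finset.card).sum + ((L.map (· ∩ T)).map Finset.card).sum := by
  intro L
  induction L with
  | nil => simp
  | cons G L ih =>
    simp only [List.map_cons, List.sum_cons]
    have hG : G.card = (G \ T).card + (G ∩ T).card := (Finset.card_sdiff_add_card_inter G T).symm
    omega

theorem sum_card_le_of_pairwise_disjoint {L : List (Finset α)} {W : Finset α}
    (hdisj : L.Pairwise (fun A B => Disjoint A B)) (hsub : ∀ F ∈ L, F ⊆ W) :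
    (L.map Finset.card).sum ≤ W.card := by
  classical
  induction L generalizing W with
  | nil => simp
  | cons F L ih =>
    have hFW : F ⊆ W := hsub F (List.mem_cons_self)
    have hdisj' := (List.pairwise_cons.1 hdisj).2
    have hFdis := (List.pairwise_cons.1 hdisj).1
    have hsub' : ∀ G ∈ L, G ⊆ W \ F := by
      intro G hG
      intro y hy
      refine Finset.mem_sdiff.2 ⟨hsub G (List.mem_cons_of_mem _ hG) hy, ?_⟩
      intro hyF
      exact Finset.disjoint_left.1 (hFdis G hG) hyF hy
    have := ih hdisj' hsub'
    have hcard : (W \ F).card = W.card - F.card := Finset.card_sdiff_of_subset hFW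
    have hle := Finset.card_le_card hFW
    simp only [List.map_cons, List.sum_cons]
    omega

/-- Lower bound for `rhoRank`: any family of at most `j` pairwise disjoint
independent subsets of `S` has total size at most `rhoRank r j S`. -/
theorem rhoRank_lb (h : IsPolyRank r) :
    ∀ (j : ℕ) (S : Finset α) (L : List (Finset α)), L.length ≤ j →
      L.Pairwise (fun A B => Disjoint A B) →
      (∀ F ∈ L, F ⊆ S ∧ r F = F.card) →
      (L.map Finset.card).sum ≤ rhoRank r j S := by
  intro j
  induction j with
  | zero =>
    intro S L hlen _ _
    interval_cases hL : L.length
    · rw [List.length_eq_zero_iff] at hL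
      subst hL
      simp
  | succ j ih =>
    intro S L hlen hdisj hmem
    cases L with
    | nil => simp
    | cons F L' =>
      -- bound against an arbitrary T in the convolution
      have hkey : ∀ T ∈ S.powerset,
          F.card + (L'.map Finset.card).sum ≤ (S \ T).card + (r T + rhoRank r j T) := by
        intro T hTp
        have hT : T ⊆ S := Finset.mem_powerset.1 hTp
        have hFS : F ⊆ S := (hmem F (List.mem_cons_self)).1
        have hFind : r F = F.card := (hmem F (List.mem_cons_self)).2
        -- split every forest along T
        have hFT : (F ∩ T).card ≤ r T := by
          have h1 : r (F ∩ T) = (F ∩ T).card :=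
            indep_subset h (Finset.inter_subset_left) hFind
          rw [← h1]
          exact h.mono (Finset.inter_subset_right)
        have hrest : ((L'.map (· ∩ T)).map Finset.card).sum ≤ rhoRank r j T := by
          apply ih T
          · rw [List.length_map]
            have := hlen
            simp only [List.length_cons] at this
            omega
          · have := (List.pairwise_cons.1 hdisj).2
            refine List.Pairwise.map _ ?_ this
            intro A B hAB
            exact Finset.disjoint_of_subset_left (Finset.inter_subset_left)
              (Finset.disjoint_of_subset_right (Finset.inter_subset_left) hAB)
          · intro G hG
            obtain ⟨G₀, hG₀, rfl⟩ := List.mem_map.1 hG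
            refine ⟨Finset.inter_subset_right, ?_⟩
            exact indep_subset h (Finset.inter_subset_left)
              (hmem G₀ (List.mem_cons_of_mem _ hG₀)).2
        -- the parts outside T fit inside S \ T
        have houts : (F \ T).card + ((L'.map (· \ T)).map Finset.card).sum ≤ (S \ T).card := by
          have : ((F \ T) :: (L'.map (· \ T))).Pairwise (fun A B => Disjoint A B) := by
            rw [List.pairwise_cons]
            constructor
            · intro G hG
              obtain ⟨G₀, hG₀, rfl⟩ := List.mem_map.1 hG
              have := (List.pairwise_cons.1 hdisj).1 G₀ hG₀
              exact Finset.disjoint_of_subset_left (Finset.sdiff_subset)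
                (Finset.disjoint_of_subset_right (Finset.sdiff_subset) this)
            · refine List.Pairwise.map _ ?_ (List.pairwise_cons.1 hdisj).2
              intro A B hAB
              exact Finset.disjoint_of_subset_left (Finset.sdiff_subset)
                (Finset.disjoint_of_subset_right (Finset.sdiff_subset) hAB)
          have h2 := sum_card_le_of_pairwise_disjoint (W := S \ T) this ?_
          · simpa using h2
          · intro G hG
            rcases List.mem_cons.1 hG with rfl | hG
            · intro y hy
              have := Finset.mem_sdiff.1 hy
              exact Finset.mem_sdiff.2 ⟨hFS this.1, this.2⟩
            · obtain ⟨G₀, hG₀, rfl⟩ := List.mem_map.1 hG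
              intro y hy
              have := Finset.mem_sdiff.1 hy
              exact Finset.mem_sdiff.2
                ⟨(hmem G₀ (List.mem_cons_of_mem _ hG₀)).1 this.1, this.2⟩
        -- combine: each card splits along T
        have hsplit : ∀ G : Finset α, G.card = (G \ T).card + (G ∩ T).card :=
          fun G => (Finset.card_sdiff_add_card_inter G T).symm
        have hsum1 := sum_card_split T L'
        have hF := hsplit F
        omega
      obtain ⟨T₀, hT₀sub, hT₀eq⟩ := exists_convRank_eq (fun T => r T + rhoRank r j T) S
      have hk := hkey T₀ (Finset.mem_powerset.2 hT₀sub)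
      have hgoal : rhoRank r (j+1) S = convRank (fun T => r T + rhoRank r j T) S := rfl
      show (F.card :: (L'.map Finset.card)).sum ≤ rhoRank r (j+1) S
      rw [hgoal, hT₀eq]
      simp only [List.sum_cons]
      omega

/-- Partition a `rhoRank`-independent set into `j` `r`-independent pieces. -/
theorem rhoRank_partition (h : IsPolyRank r) :
    ∀ (j : ℕ) (B : Finset α), rhoRank r j B = B.card →
      ∃ L : List (Finset α), L.length = j ∧ L.Pairwise (fun A B => Disjoint A B) ∧
        (∀ F ∈ L, F ⊆ B ∧ r F = F.card) ∧ (L.map Finset.card).sum = B.card := by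
  intro j
  induction j with
  | zero =>
    intro B hB
    simp only [rhoRank] at hB
    refine ⟨[], rfl, List.Pairwise.nil, by simp, by simp [← hB]⟩
  | succ j ih =>
    intro B hB
    have hdens : ∀ T ⊆ B, T.card ≤ r T + rhoRank r j T := by
      intro T hT
      have h1 : rhoRank r (j+1) B ≤ (B \ T).card + (r T + rhoRank r j T) := by
        have hgoal : rhoRank r (j+1) B = convRank (fun T => r T + rhoRank r j T) B := rfl
        rw [hgoal]
        exact convRank_le hT
      have h2 : (B \ T).card = B.card - T.card := Finset.card_sdiff_of_subset hT
      have h3 : T.card ≤ B.card := Finset.card_le_card hT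
      omega
    obtain ⟨I, hIB, hIind, hrest⟩ :=
      polyrank_partition h (isPolyRank_rhoRank h j) B hdens
    obtain ⟨L', hlen, hdisj, hmem, hsum⟩ := ih (B \ I) hrest
    refine ⟨I :: L', by simp [hlen], ?_, ?_, ?_⟩
    · rw [List.pairwise_cons]
      constructor
      · intro G hG
        have hGsub := (hmem G hG).1
        exact Finset.disjoint_left.2 fun y hyI hyG =>
          (Finset.mem_sdiff.1 (hGsub hyG)).2 hyI
      · exact hdisj
    · intro F hF
      rcases List.mem_cons.1 hF with rfl | hF
      · exact ⟨hIB, hIind⟩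
      · exact ⟨(hmem F hF).1.trans (Finset.sdiff_subset), (hmem F hF).2⟩
    · simp only [List.map_cons, List.sum_cons, hsum]
      have := Finset.card_sdiff_of_subset hIB
      have := Finset.card_le_card hIB
      omega

end Union

section Support
open SimpleGraph
variable {V : Type*} [Fintype V] [DecidableEq V]

/-- Degree of a vertex in the graph with edge finset `B`. -/
theorem ncard_neighborSet_eq {B : Finset (Sym2 V)} (hB : ∀ e ∈ B, ¬ e.IsDiag) (v : V) :
    ((grf B).neighborSet v).ncard = (B.filter (fun e => v ∈ e)).card := by
  classical
  have hset : (grf B).neighborSet v =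
      ↑(Finset.univ.filter (fun w => s(v,w) ∈ B ∧ v ≠ w)) := by
    ext w
    simp only [SimpleGraph.mem_neighborSet, Finset.coe_filter, Set.mem_setOf_eq,
      Finset.mem_univ, true_and, SimpleGraph.fromEdgeSet_adj, Finset.mem_coe]
  rw [hset, Set.ncard_coe_finset]
  apply Finset.card_bij (fun w _ => s(v,w))
  · intro w hw
    have := Finset.mem_filter.1 hw
    exact Finset.mem_filter.2 ⟨this.2.1, Sym2.mem_mk_left v w⟩
  · intro w hw w' hw' heq
    exact Sym2.congr_right.1 heq
  · intro e he
    have := Finset.mem_filter.1 he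
    obtain ⟨w, rfl⟩ := Sym2.mem_iff_exists.1 this.2
    refine ⟨w, Finset.mem_filter.2 ⟨Finset.mem_univ w, this.1, ?_⟩, rfl⟩
    intro hvw
    exact hB _ this.1 (Sym2.mk_isDiag_iff.2 hvw)

/-- Choose `m` indices out of `k` whose total is at most an `m/k` fraction. -/
theorem exists_small_m_subset (k m : ℕ) (hmk : m ≤ k) (a : Fin k → ℕ) :
    ∃ J : Finset (Fin k), J.card = m ∧
      k * (∑ j ∈ J, a j) ≤ m * (∑ j, a j) := by
  classical
  have hP : (Finset.univ.powersetCard m (α := Fin k)).Nonempty := by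
    apply Finset.powersetCard_nonempty.2
    simp [hmk]
  obtain ⟨J, hJP, hJmin⟩ := Finset.exists_min_image _ (fun J => ∑ j ∈ J, a j) hP
  have hJcard : J.card = m := (Finset.mem_powersetCard.1 hJP).2
  have hJuniv : J ⊆ Finset.univ := (Finset.mem_powersetCard.1 hJP).1
  refine ⟨J, hJcard, ?_⟩
  have hswap : ∀ j ∈ J, ∀ j' ∈ Finset.univ \ J, a j ≤ a j' := by
    intro j hj j' hj'
    have hj'notJ : j' ∉ J := (Finset.mem_sdiff.1 hj').2
    set J' := insert j' (J.erase j) with hJ'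
    have hjj' : j ≠ j' := fun e => hj'notJ (e ▸ hj)
    have hJ'card : J'.card = m := by
      rw [hJ', Finset.card_insert_of_notMem (fun hm =>
        hj'notJ (Finset.mem_of_mem_erase hm)), Finset.card_erase_of_mem hj]
      have : 0 < J.card := Finset.card_pos.2 ⟨j, hj⟩
      omega
    have hJ'P : J' ∈ Finset.univ.powersetCard m :=
      Finset.mem_powersetCard.2 ⟨Finset.subset_univ _, hJ'card⟩
    have hmin := hJmin J' hJ'P
    have hsum' : ∑ i ∈ J', a i = (∑ i ∈ J.erase j, a i) + a j' := by
      rw [hJ', Finset.sum_insert (fun hm => hj'notJ (Finset.mem_of_mem_erase hm))]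
      omega
    have hsumJ : (∑ i ∈ J.erase j, a i) + a j = ∑ i ∈ J, a i :=
      Finset.sum_erase_add J a hj
    omega
  have hcardc : (Finset.univ \ J).card = k - m := by
    rw [Finset.card_sdiff_of_subset hJuniv, hJcard]
    simp
  -- (k-m) * ∑_J ≤ m * ∑_(univ\J)
  have hkey : (k - m) * (∑ j ∈ J, a j) ≤ m * (∑ j ∈ Finset.univ \ J, a j) := by
    have h1 : ∀ j ∈ J, (k - m) * a j ≤ ∑ j' ∈ Finset.univ \ J, a j' := by
      intro j hj
      calc (k - m) * a j = ∑ _j' ∈ Finset.univ \ J, a j := by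
            rw [Finset.sum_const, hcardc, smul_eq_mul]
      _ ≤ ∑ j' ∈ Finset.univ \ J, a j' :=
            Finset.sum_le_sum (fun j' hj' => hswap j hj j' hj')
    calc (k - m) * (∑ j ∈ J, a j) = ∑ j ∈ J, (k - m) * a j := Finset.mul_sum _ _ _
    _ ≤ ∑ _j ∈ J, (∑ j' ∈ Finset.univ \ J, a j') := Finset.sum_le_sum h1
    _ = m * (∑ j' ∈ Finset.univ \ J, a j') := by
          rw [Finset.sum_const, hJcard, smul_eq_mul]
  have hsplit : (∑ j ∈ Finset.univ \ J, a j) + (∑ j ∈ J, a j) = ∑ j, a j :=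
    Finset.sum_sdiff hJuniv
  calc k * (∑ j ∈ J, a j) = m * (∑ j ∈ J, a j) + (k - m) * (∑ j ∈ J, a j) := by
        rw [← Nat.add_mul]
        congr 1
        omega
  _ ≤ m * (∑ j ∈ J, a j) + m * (∑ j ∈ Finset.univ \ J, a j) := by omega
  _ = m * (∑ j, a j) := by rw [← Nat.mul_add]; congr 1; omega

/-- The ceiling `⌈(m/k)·d⌉` as a natural number. -/
theorem ceil_div_eq (m d k : ℕ) (hk : 0 < k) :
    ⌈((m : ℚ) / (k : ℚ)) * (d : ℚ)⌉ = ((m * d + k - 1) / k : ℕ) := by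
  have hfrac : ((m : ℚ) / (k : ℚ)) * (d : ℚ) = ((m * d : ℕ) : ℚ) / (k : ℚ) := by
    push_cast
    ring
  rw [hfrac]
  set q : ℕ := (m * d + k - 1) / k with hq
  set A : ℕ := m * d + k - 1 with hA
  have hdm := Nat.div_add_mod A k
  have hmod := Nat.mod_lt A hk
  have h1 : k * q ≤ m * d + k - 1 := by
    rw [hq, hA] at *
    omega
  have h2 : m * d ≤ k * q := by
    rw [hq, hA] at *
    omega
  have hkQ : (0 : ℚ) < (k : ℚ) := by exact_mod_cast hk
  have hlt : k * q < m * d + k := by omega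
  rw [Int.ceil_eq_iff]
  constructor
  · rw [lt_div_iff₀ hkQ]
    have hc : (k : ℚ) * (q : ℚ) < (m : ℚ) * (d : ℚ) + (k : ℚ) := by exact_mod_cast hlt
    push_cast
    linarith
  · rw [div_le_iff₀ hkQ]
    have hc : ((m * d : ℕ) : ℚ) ≤ (q : ℚ) * (k : ℚ) := by
      have h2' : m * d ≤ q * k := by rw [Nat.mul_comm q k]; exact h2
      exact_mod_cast h2'
    push_cast at hc ⊢
    linarith

end Support

section ListHelp

theorem list_sum_le {L : List ℕ} {c : ℕ} (hle : ∀ x ∈ L, x ≤ c) :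
    L.sum ≤ L.length * c := by
  induction L with
  | nil => simp
  | cons a L ih =>
    have ha : a ≤ c := hle a (by simp)
    have hL := ih (fun x hx => hle x (by simp [hx]))
    simp only [List.sum_cons, List.length_cons]
    have : (L.length + 1) * c = L.length * c + c := by ring
    omega

theorem list_all_eq {L : List ℕ} {c : ℕ} (hle : ∀ x ∈ L, x ≤ c)
    (hsum : L.sum = L.length * c) : ∀ x ∈ L, x = c := by
  induction L with
  | nil => simp
  | cons a L ih =>
    have ha : a ≤ c := hle a (by simp)
    have hL : L.sum ≤ L.length * c := list_sum_le (fun x hx => hle x (by simp [hx]))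
    simp only [List.sum_cons, List.length_cons] at hsum
    have hexp : (L.length + 1) * c = L.length * c + c := by ring
    have hac : a = c ∧ L.sum = L.length * c := by omega
    intro x hx
    rcases List.mem_cons.1 hx with rfl | hx
    · exact hac.1
    · exact ih (fun y hy => hle y (by simp [hy])) hac.2 x hx

end ListHelp

end TreePack


open SimpleGraph

variable {V : Type*}

/-- Number of connected components. -/
noncomputable def numComponents (G : SimpleGraph V) : ℕ :=
  Nat.card G.ConnectedComponent

/-- Degree of a vertex. -/
noncomputable def deg (G : SimpleGraph V) (v : V) : ℕ := (G.neighborSet v).ncard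

/-- Number of edges of `G` with both ends in `S`. -/
noncomputable def edgesIn (G : SimpleGraph V) (S : Set V) : ℕ :=
  {e ∈ G.edgeSet | ∀ v ∈ e, v ∈ S}.ncard

/-- `G \ [S, F]`: remove all edges incident to `S` except edges of `F`. -/
def delExcept (G F : SimpleGraph V) (S : Set V) : SimpleGraph V where
  Adj x y := G.Adj x y ∧ (F.Adj x y ∨ (x ∉ S ∧ y ∉ S))
  symm := ⟨by
    rintro x y ⟨h1, h2⟩
    exact ⟨h1.symm, h2.elim (fun hf => Or.inl hf.symm) (fun hc => Or.inr ⟨hc.2, hc.1⟩)⟩⟩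
  loopless := ⟨fun x h => h.1.ne rfl⟩

/-- `m`-tree-connected: contains `m` pairwise edge-disjoint spanning trees. -/
def IsTreeConnected (m : ℕ) (G : SimpleGraph V) : Prop :=
  ∃ T : Fin m → SimpleGraph V,
    (∀ i, T i ≤ G) ∧ (∀ i, (T i).Connected ∧ (T i).IsAcyclic) ∧
    ∀ i j, i ≠ j → Disjoint (T i).edgeSet (T j).edgeSet

/-- Two vertices lie in a common `m`-tree-connected induced subgraph, i.e. in the same
`m`-tree-connected component. -/
def sameTC (m : ℕ) (G : SimpleGraph V) (u v : V) : Prop :=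
  ∃ W : Set V, u ∈ W ∧ v ∈ W ∧ IsTreeConnected m (G.induce W)

/-- Tree-connectivity measure `Ω_m`. -/
noncomputable def Omega (m : ℕ) (G : SimpleGraph V) : ℝ :=
  (Nat.card (Quot (sameTC m G)) : ℝ) -
    ({e ∈ G.edgeSet | ∃ x y, e = s(x, y) ∧ ¬ sameTC m G x y}.ncard : ℝ) / m

/-- `k`-edge-connected. -/
def EdgeConnected (k : ℕ) (G : SimpleGraph V) : Prop :=
  ∀ E' : Set (Sym2 V), E'.ncard < k → (G.deleteEdges E').Connected

/-- Contraction of a vertex set to a single vertex. -/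
noncomputable def vrep (X : Set V) (v : V) : Option {v : V // v ∉ X} :=
  @dite _ (v ∈ X) (Classical.dec _) (fun _ => none) (fun h => some ⟨v, h⟩)

noncomputable def contract (G : SimpleGraph V) (X : Set V) :
    SimpleGraph (Option {v : V // v ∉ X}) where
  Adj a b := a ≠ b ∧ ∃ x y, G.Adj x y ∧ vrep X x = a ∧ vrep X y = b
  symm := ⟨by
    rintro a b ⟨hne, x, y, h, hx, hy⟩
    exact ⟨hne.symm, y, x, h.symm, hy, hx⟩⟩
  loopless := ⟨fun a h => h.1 rfl⟩

/-- Contraction of every component of `F`. -/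
def contractComponents (G F : SimpleGraph V) : SimpleGraph F.ConnectedComponent where
  Adj a b := a ≠ b ∧ ∃ x y, G.Adj x y ∧ F.connectedComponentMk x = a ∧ F.connectedComponentMk y = b
  symm := ⟨by
    rintro a b ⟨hne, x, y, h, hx, hy⟩
    exact ⟨hne.symm, y, x, h.symm, hy, hx⟩⟩
  loopless := ⟨fun a h => h.1 rfl⟩

/-- Number of edges of `G` incident to `v` joining different components of `F`. -/
noncomputable def degSep (G F : SimpleGraph V) (v : V) : ℕ :=
  {w | G.Adj v w ∧ ¬ F.Reachable v w}.ncard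

/-- Number of edges of `G` with both ends in `S` joining different components of `F`. -/
noncomputable def edgesInSep (G F : SimpleGraph V) (S : Set V) : ℕ :=
  {e : Sym2 V | ∃ x y, e = s(x, y) ∧ G.Adj x y ∧ x ∈ S ∧ y ∈ S ∧ ¬ F.Reachable x y}.ncard

/-- `K_{1,n}`-free. -/
def K1nFree (n : ℕ) (G : SimpleGraph V) : Prop :=
  ¬ ∃ (c : V) (A : Finset V), A.card = n ∧ (∀ a ∈ A, G.Adj c a) ∧
      ∀ a ∈ A, ∀ b ∈ A, a ≠ b → ¬ G.Adj a b

/-- A spanning closed walk meeting each vertex `v` at most `f v` times. -/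
def HasClosedSpanningWalk [DecidableEq V] (G : SimpleGraph V) (f : V → ℕ) : Prop :=
  ∃ (u : V) (w : G.Walk u u), (∀ v, v ∈ w.support) ∧ ∀ v, w.support.tail.count v ≤ f v

open TreePack

/-- If `G` is `k`-tree-connected with `k ≥ m` and `X` is independent, then
`G` has an `m`-tree-connected spanning subgraph `H` with `d_H(v) ≤ ⌈(m/k)·d_G(v)⌉` for all
`v ∈ X`. -/
theorem stmt_18 {V : Type*} [Fintype V] (G : SimpleGraph V) (m k : ℕ)
    (hm : 0 < m) (hmk : m ≤ k) (hG : IsTreeConnected k G) (X : Set V)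
    (hX : ∀ x ∈ X, ∀ y ∈ X, ¬ G.Adj x y) :
    ∃ H : SimpleGraph V, H ≤ G ∧ IsTreeConnected m H ∧
      ∀ v ∈ X, (deg H v : ℤ) ≤ ⌈((m : ℚ) / k) * (deg G v : ℚ)⌉ := by
    classical
  letI : DecidableEq V := Classical.decEq V
  obtain ⟨Tk, hTle, hTci, hTdisj⟩ := hG
  have hk0 : 0 < k := lt_of_lt_of_le hm hmk
  have hne : Nonempty V := ((hTci ⟨0, hk0⟩).1).nonempty
  set n := Fintype.card V with hn
  have hn0 : 0 < n := Fintype.card_pos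
  set E : Finset (Sym2 V) := G.edgeFinset with hE
  have hEnd : ∀ e ∈ E, ¬ e.IsDiag := fun e he =>
    G.not_isDiag_of_mem_edgeSet (mem_edgeFinset.1 he)
  set Ev : V → Finset (Sym2 V) := fun v => E.filter (fun e => v ∈ e) with hEv
  set cap : V → ℕ := fun v => (m * (Ev v).card + k - 1) / k with hcap
  have hcapk : ∀ v, m * (Ev v).card ≤ k * cap v := by
    intro v
    set d := (Ev v).card
    set A := m * d + k - 1 with hA
    have hdm := Nat.div_add_mod A k
    have hmod := Nat.mod_lt A hk0
    show m * d ≤ k * (A / k)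
    omega
  set O : Fin k → Finset (Sym2 V) := fun j => (Tk j).edgeFinset with hO
  have hgrfO : ∀ j, grf (O j) = Tk j := by
    intro j
    show fromEdgeSet ↑(Tk j).edgeFinset = Tk j
    rw [coe_edgeFinset, fromEdgeSet_edgeSet]
  have hOsub : ∀ j, O j ⊆ E := fun j => edgeFinset_mono (hTle j)
  have hOnd : ∀ j, ∀ e ∈ O j, ¬ e.IsDiag := fun j e he' => hEnd e (hOsub j he')
  have hOind : ∀ j, rgr (O j) = (O j).card := by
    intro j
    apply rgr_eq_card_of_acyclic (hOnd j)
    rw [hgrfO j]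
    exact (hTci j).2
  have hOcomp : ∀ j, ncomp (O j) = 1 := by
    intro j
    apply ncomp_eq_one_of_connected
    rw [hgrfO j]
    exact (hTci j).1
  have hOn1 : ∀ j, (O j).card = n - 1 := by
    intro j
    have h1 := hOind j
    have h2 := hOcomp j
    unfold rgr at h1
    rw [h2] at h1
    omega
  set t := m * (n - 1) with ht
  set rr : Finset (Sym2 V) → ℕ := rhoRank rgr m with hrr0
  have hrr : IsPolyRank rr := isPolyRank_rhoRank isPolyRank_rgr m
  set X' : Finset V := (Set.toFinite X).toFinset with hX'
  have hmemX' : ∀ v, v ∈ X' ↔ v ∈ X := fun v => Set.Finite.mem_toFinset _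
  have hEvsub : ∀ v ∈ X', Ev v ⊆ E := fun v _ => Finset.filter_subset _ _
  have hEvdisj : ∀ u ∈ X', ∀ v ∈ X', u ≠ v → Disjoint (Ev u) (Ev v) := by
    intro u hu v hv huv
    rw [Finset.disjoint_left]
    intro e heu hev
    have h1 : u ∈ e := (Finset.mem_filter.1 heu).2
    have h2 : v ∈ e := (Finset.mem_filter.1 hev).2
    have heq : e = s(u,v) := (Sym2.mem_and_mem_iff huv).1 ⟨h1, h2⟩
    have heE : e ∈ E := (Finset.mem_filter.1 heu).1
    rw [heq] at heE
    exact hX u ((hmemX' u).1 hu) v ((hmemX' v).1 hv) (mem_edgeFinset.1 heE)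
  -- the rank hypothesis for the Rado theorem
  have hyp : ∀ Y ⊆ X', t ≤ rr (E \ Y.biUnion Ev) + ∑ v ∈ Y, cap v := by
    intro Y hY
    set D := Y.biUnion Ev with hD
    set a : Fin k → ℕ := fun j => (O j ∩ D).card with ha
    obtain ⟨J, hJcard, hJle⟩ := exists_small_m_subset k m hmk a
    set L : List (Finset (Sym2 V)) := J.toList.map (fun j => O j \ D) with hL
    have hLlen : L.length = m := by
      rw [hL, List.length_map, Finset.length_toList, hJcard]
    have hOdisj : ∀ (j j' : Fin k), j ≠ j' → Disjoint (O j) (O j') := by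
      intro j j' hjj'
      have h1 := hTdisj j j' hjj'
      rw [← Finset.disjoint_coe]
      show Disjoint (↑(Tk j).edgeFinset : Set (Sym2 V)) ↑(Tk j').edgeFinset
      rw [coe_edgeFinset, coe_edgeFinset]
      exact h1
    have hLdisj : L.Pairwise (fun A B => Disjoint A B) := by
      refine List.Pairwise.map _ ?_ J.nodup_toList
      intro j j' hjj'
      exact Finset.disjoint_of_subset_left (Finset.sdiff_subset)
        (Finset.disjoint_of_subset_right (Finset.sdiff_subset) (hOdisj j j' hjj'))
    have hLmem : ∀ F ∈ L, F ⊆ E \ D ∧ rgr F = F.card := by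
      intro F hF
      obtain ⟨j, _, rfl⟩ := List.mem_map.1 hF
      constructor
      · intro y hy
        have := Finset.mem_sdiff.1 hy
        exact Finset.mem_sdiff.2 ⟨hOsub j this.1, this.2⟩
      · exact indep_subset isPolyRank_rgr (Finset.sdiff_subset) (hOind j)
    have hlb := rhoRank_lb isPolyRank_rgr m (E \ D) L (le_of_eq hLlen) hLdisj hLmem
    have hsumL : (L.map Finset.card).sum = ∑ j ∈ J, (O j \ D).card := by
      rw [hL, List.map_map]
      exact Finset.sum_map_toList J _
    have haj_le : ∀ j, a j ≤ n - 1 := by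
      intro j
      have h0 : O j ∩ D ⊆ O j := Finset.inter_subset_left
      have h1 := Finset.card_le_card h0
      rw [hOn1 j] at h1
      exact h1
    have hcardsd : ∀ j : Fin k, (O j \ D).card = (n-1) - a j := by
      intro j
      have h1 := Finset.card_sdiff_add_card_inter (O j) D
      rw [hOn1 j] at h1
      have h2 : (O j ∩ D).card = a j := rfl
      have h3 := haj_le j
      omega
    have hsum_eq : ∑ j ∈ J, ((n-1) - a j) + ∑ j ∈ J, a j = m * (n-1) := by
      rw [← Finset.sum_add_distrib]
      rw [Finset.sum_congr rfl (fun j _ => Nat.sub_add_cancel (haj_le j))]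
      rw [Finset.sum_const, hJcard, smul_eq_mul]
    have hsum_aD : ∑ j, a j ≤ D.card := by
      have hdisjint : ∀ x ∈ (Finset.univ : Finset (Fin k)), ∀ y ∈ Finset.univ, x ≠ y →
          Disjoint (O x ∩ D) (O y ∩ D) := by
        intro x _ y _ hxy
        exact Finset.disjoint_of_subset_left (Finset.inter_subset_left)
          (Finset.disjoint_of_subset_right (Finset.inter_subset_left) (hOdisj x y hxy))
      calc ∑ j, a j = (Finset.univ.biUnion (fun j => O j ∩ D)).card :=
            (Finset.card_biUnion hdisjint).symm
      _ ≤ D.card := Finset.card_le_card (by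
            intro y hy
            obtain ⟨j, _, hj⟩ := Finset.mem_biUnion.1 hy
            exact (Finset.mem_inter.1 hj).2)
    have hDcard : D.card ≤ ∑ v ∈ Y, (Ev v).card := Finset.card_biUnion_le
    have hJa_le : ∑ j ∈ J, a j ≤ ∑ v ∈ Y, cap v := by
      apply Nat.le_of_mul_le_mul_left _ hk0
      calc k * ∑ j ∈ J, a j ≤ m * ∑ j, a j := hJle
      _ ≤ m * ∑ v ∈ Y, (Ev v).card := Nat.mul_le_mul_left m (le_trans hsum_aD hDcard)
      _ = ∑ v ∈ Y, m * (Ev v).card := Finset.mul_sum _ _ _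
      _ ≤ ∑ v ∈ Y, k * cap v := Finset.sum_le_sum (fun v _ => hcapk v)
      _ = k * ∑ v ∈ Y, cap v := (Finset.mul_sum _ _ _).symm
    have hlbsum : ∑ j ∈ J, ((n-1) - a j) ≤ rr (E \ D) := by
      rw [← Finset.sum_congr rfl (fun j (_ : j ∈ J) => hcardsd j), ← hsumL]
      exact hlb
    omega
  obtain ⟨B, hBE, hBind, hBcard, hBcap⟩ :=
    polyrank_rado hrr cap t X' Ev E hEvsub hEvdisj hyp
  obtain ⟨L, hLlen, hLdisj, hLmem, hLsum⟩ := rhoRank_partition isPolyRank_rgr m B hBind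
  have hBnd : ∀ e ∈ B, ¬ e.IsDiag := fun e he => hEnd e (hBE he)
  have hFle : ∀ F ∈ L, F.card ≤ n - 1 := by
    intro F hF
    have h1 := (hLmem F hF).2
    have h2 : rgr F ≤ n - 1 := rgr_le_pred F
    omega
  have hsumLc : (L.map Finset.card).sum = (L.map Finset.card).length * (n-1) := by
    rw [hLsum, hBcard, List.length_map, hLlen]
  have hFeq : ∀ F ∈ L, F.card = n - 1 := by
    intro F hF
    have := list_all_eq (L := L.map Finset.card) (c := n - 1)
      (by
        intro x hx
        obtain ⟨F', hF', rfl⟩ := List.mem_map.1 hx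
        exact hFle F' hF')
      hsumLc
    exact this F.card (List.mem_map.2 ⟨F, hF, rfl⟩)
  have htree : ∀ F ∈ L, (grf F).Connected ∧ (grf F).IsAcyclic := by
    intro F hF
    have hind := (hLmem F hF).2
    have hacyc := acyclic_of_rgr_eq_card hind
    have hcardF := hFeq F hF
    have hnc : ncomp F = 1 := by
      have h1 := ncomp_le_card F
      have h2 := ncomp_pos F
      unfold rgr at hind
      omega
    exact ⟨connected_of_ncomp_eq_one hnc, hacyc⟩
  refine ⟨grf B, ?_, ?_, ?_⟩
  · have hsub : (↑B : Set (Sym2 V)) ⊆ G.edgeSet := by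
      rw [← coe_edgeFinset]
      exact_mod_cast hBE
    calc grf B ≤ fromEdgeSet G.edgeSet := fromEdgeSet_mono hsub
    _ = G := fromEdgeSet_edgeSet G
  · refine ⟨fun i => grf (L.get (Fin.cast hLlen.symm i)), ?_, ?_, ?_⟩
    · intro i
      exact grf_mono ((hLmem _ (List.get_mem L _)).1)
    · intro i
      exact htree _ (List.get_mem L _)
    · intro i j hij
      have hgetdisj : Disjoint (L.get (Fin.cast hLlen.symm i)) (L.get (Fin.cast hLlen.symm j)) := by
        have hdisj := List.pairwise_iff_get.1 hLdisj
        have hne' : (Fin.cast hLlen.symm i) ≠ (Fin.cast hLlen.symm j) := by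
          intro hcon
          apply hij
          have := congrArg (Fin.cast hLlen) hcon
          simpa using this
        rcases lt_or_gt_of_ne hne' with h | h
        · exact hdisj _ _ h
        · exact (hdisj _ _ h).symm
      have hsub : ∀ F : Finset (Sym2 V), (grf F).edgeSet ⊆ ↑F := by
        intro F
        rw [SimpleGraph.edgeSet_fromEdgeSet]
        exact Set.diff_subset
      exact Set.disjoint_of_subset (hsub _) (hsub _)
        (Finset.disjoint_coe.2 hgetdisj)
  · intro v hv
    have hvX' : v ∈ X' := (hmemX' v).2 hv
    have hdegH : deg (grf B) v = (B ∩ Ev v).card := by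
      show ((grf B).neighborSet v).ncard = _
      rw [ncard_neighborSet_eq hBnd v]
      congr 1
      ext e
      constructor
      · intro he
        have h1 := Finset.mem_filter.1 he
        exact Finset.mem_inter.2 ⟨h1.1, Finset.mem_filter.2 ⟨hBE h1.1, h1.2⟩⟩
      · intro he
        have h1 := Finset.mem_inter.1 he
        exact Finset.mem_filter.2 ⟨h1.1, (Finset.mem_filter.1 h1.2).2⟩
    have hdegG : deg G v = (Ev v).card := by
      show (G.neighborSet v).ncard = _
      have hGeq : G = grf E := by
        rw [hE]
        show G = fromEdgeSet ↑G.edgeFinset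
        rw [coe_edgeFinset, fromEdgeSet_edgeSet]
      conv_lhs => rw [hGeq]
      rw [ncard_neighborSet_eq hEnd v]
    rw [hdegH, hdegG, ceil_div_eq _ _ _ hk0]
    exact_mod_cast hBcap v hvX'
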